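/- arXiv:2202.09362 — 6 statements merged into one kernel-verified Lean document; each statement's English description precedes it below -/
import Mathlib

section
/- Under within-type exchangeability, fix a type i ∈ {1,…,L}, a time t ≥ 0, a number δ > 0, and a count vector m = (m_1,…,m_L) with 0 ≤ m_l ≤ n_l for l ≠ i and 0 ≤ m_i ≤ n_i − 1. Define A := P( for each l ≠ i: T^{(l)}_j > t for 1 ≤ j ≤ m_l and T^{(l)}_j ≤ t for m_l < j ≤ n_l; and for type i: t < T^{(i)}_1 ≤ t+δ, T^{(i)}_j > t for 2 ≤ j ≤ m_i+1, and T^{(i)}_j ≤ t for m_i+1 < j ≤ n_i ). Then A = Σ_{j_1=0}^{n_1−m_1} ⋯ Σ_{j_i=0}^{n_i−m_i−1} ⋯ Σ_{j_L=0}^{n_L−m_L} (−1)^{j_1+⋯+j_L} (∏_{l≠i} C(n_l−m_l, j_l)) · C(n_i−m_i−1, j_i) · [ S(m+j+e_i; t) − S′(m+j; t, δ) ], where e_i is the i-th standard unit vector, and S′(k; t, δ) := P( T^{(l)}_r > t for every l and every 1 ≤ r ≤ k_l, and additionally T^{(i)}_{k_i+1} > t+δ ). -/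
/-!
Write `Base` for the components that must be alive at time `t`: the first `m_l` of each type
`l ≠ i` and the first `m_i + 1` of type `i`, the first of which must moreover fail by `t + δ`.
Expanding the indicator that all other components have failed as `∏ (1 - 1{t < T})` turns the
probability into an alternating sum, over sets `S` of additional survivors, of probabilities that
all of `Base ∪ S` survive, with or without the marked component outliving `t + δ`. By within-type
exchangeability such a probability depends only on how many components of each type are
involved: a permutation carries `Base ∪ S` onto initial segments and the marked component onto
the last place of its segment. Collecting the sets `S` with a common size vector gives the
binomial multiplicities.
-/

open MeasureTheory Finset

section InclusionExclusion

variable {ι : Type*} [Fintype ι] [DecidableEq ι] {κ : ι → Type*}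

theorem Finset.prod_prod_one_sub_eq_sum_piFinset {R : Type*} [CommRing R]
    (F : ∀ l, Finset (κ l)) (a : ∀ l, κ l → R) :
    ∏ l, ∏ r ∈ F l, (1 - a l r) =
      ∑ S ∈ Fintype.piFinset fun l => (F l).powerset,
        (-1) ^ (∑ l, #(S l)) * ∏ l, ∏ r ∈ S l, a l r := by
  simp_rw [sub_eq_add_neg, prod_one_add, prod_neg, prod_univ_sum, prod_mul_distrib,
    prod_pow_eq_pow_sum]

omit [DecidableEq ι] in
theorem Set.indicator_iInter_biInter_one_apply {Ω R : Type*} [CommMonoidWithZero R]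
    (B : ∀ l, κ l → Set Ω) (S : ∀ l, Finset (κ l)) (ω : Ω) :
    (⋂ l, ⋂ r ∈ S l, B l r).indicator (1 : Ω → R) ω = ∏ l, ∏ r ∈ S l, (B l r).indicator 1 ω := by
  classical
  simp [Set.indicator_apply, prod_boole]

theorem measureReal_inter_iInter_compl_eq_sum {Ω : Type*} [MeasurableSpace Ω] (μ : Measure Ω)
    [IsFiniteMeasure μ] {E : Set Ω} (hE : MeasurableSet E) {A : ∀ l, κ l → Set Ω}
    (hA : ∀ l r, MeasurableSet (A l r)) (F : ∀ l, Finset (κ l)) :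
    μ.real (E ∩ ⋂ l, ⋂ r ∈ F l, (A l r)ᶜ) =
      ∑ S ∈ Fintype.piFinset fun l => (F l).powerset,
        (-1) ^ (∑ l, #(S l)) * μ.real (E ∩ ⋂ l, ⋂ r ∈ S l, A l r) := by
  have hmeas (B : ∀ l, κ l → Set Ω) (hB : ∀ l r, MeasurableSet (B l r))
      (S : ∀ l, Finset (κ l)) : MeasurableSet (E ∩ ⋂ l, ⋂ r ∈ S l, B l r) :=
    hE.inter <| .iInter fun l => (S l).measurableSet_biInter fun r _ => hB l r
  have hindicator : (E ∩ ⋂ l, ⋂ r ∈ F l, (A l r)ᶜ).indicator (1 : Ω → ℝ) =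
      fun ω => ∑ S ∈ Fintype.piFinset fun l => (F l).powerset,
        (-1) ^ (∑ l, #(S l)) * (E ∩ ⋂ l, ⋂ r ∈ S l, A l r).indicator 1 ω := by
    ext ω
    simp only [Set.inter_indicator_one, Pi.mul_apply, Set.indicator_iInter_biInter_one_apply,
      Set.indicator_compl, Pi.sub_apply, Pi.one_apply, prod_prod_one_sub_eq_sum_piFinset,
      mul_sum]
    exact sum_congr rfl fun S _ => by ring
  rw [← integral_indicator_one (hmeas _ (fun l r => (hA l r).compl) F), hindicator,
    integral_finsetSum _ fun S _ => ((integrable_const 1).indicator (hmeas A hA S)).const_mul _]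
  simp only [integral_const_mul, integral_indicator_one (hmeas A hA _)]

theorem Finset.sum_piFinset_powerset_eq_sum_choose {R : Type*} [CommSemiring R]
    (F : ∀ l, Finset (κ l)) {c : ι → ℕ} (hc : ∀ l, #(F l) = c l) (g : (ι → ℕ) → R) :
    ∑ S ∈ Fintype.piFinset fun l => (F l).powerset, g (fun l => #(S l)) =
      ∑ j : ∀ l, Fin (c l + 1), (∏ l, ((c l).choose (j l) : R)) * g (fun l => j l) := by
  have hfiber (j : ∀ l, Fin (c l + 1)) :
      {S ∈ Fintype.piFinset fun l => (F l).powerset |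
        (fun l => Fin.ofNat (c l + 1) #(S l)) = j}
        = Fintype.piFinset fun l => (F l).powersetCard (j l) := by
    ext S
    simp only [mem_filter, Fintype.mem_piFinset, mem_powerset, mem_powersetCard, funext_iff,
      Fin.ext_iff, Fin.val_ofNat]
    refine ⟨fun ⟨hS, hj⟩ l => ⟨hS l, ?_⟩, fun h => ⟨fun l => (h l).1, fun l => ?_⟩⟩
    · rw [← hj l, Nat.mod_eq_of_lt (Nat.lt_succ_of_le (hc l ▸ card_le_card (hS l)))]
    · rw [(h l).2, Nat.mod_eq_of_lt (j l).isLt]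
  -- `Fin.ofNat` reduces modulo `c l + 1`, which does nothing here since `#(S l) ≤ c l`.
  rw [← sum_fiberwise _ (fun S l => Fin.ofNat (c l + 1) #(S l))]
  refine sum_congr rfl fun j _ => ?_
  have hg : ∀ S ∈ Fintype.piFinset (fun l => (F l).powersetCard (j l)),
      g (fun l => #(S l)) = g (fun l => j l) := fun S hS =>
    congrArg g <| funext fun l => (mem_powersetCard.mp (Fintype.mem_piFinset.mp hS l)).2
  rw [hfiber, sum_congr rfl hg, sum_const, Fintype.card_piFinset, nsmul_eq_mul]
  simp [hc]

end InclusionExclusion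

theorem measureReal_inter_setOf_le {Ω : Type*} [MeasurableSpace Ω] (μ : Measure Ω)
    [IsFiniteMeasure μ] (X : Set Ω) {Y : Ω → ℝ} (hY : Measurable Y) (b : ℝ) :
    μ.real (X ∩ {ω | Y ω ≤ b}) = μ.real X - μ.real (X ∩ {ω | b < Y ω}) := by
  rw [← measureReal_inter_add_sdiff (s := X) (measurableSet_lt measurable_const hY),
    add_sub_cancel_left]
  congr 1
  ext ω
  simp

theorem Equiv.Perm.exists_apply_eq_and_map_finset_eq {β : Type*} {s t : Finset β} {a b : β}
    (ha : a ∈ s) (hb : b ∈ t) (h : #s = #t) :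
    ∃ σ : Perm β, σ a = b ∧ s.map σ.toEmbedding = t := by
  classical
  set e : s ≃ t := (s.equivOfCardEq h).trans (swap (s.equivOfCardEq h ⟨a, ha⟩) ⟨b, hb⟩)
  obtain ⟨σ, hσ⟩ := Perm.exists_extending_pair (fun x : s => (x : β)) (fun x : s => (e x : β))
    Subtype.val_injective (Subtype.val_injective.comp e.injective)
  refine ⟨σ, by simpa [e] using hσ ⟨a, ha⟩, eq_of_subset_of_card_le (fun y hy => ?_) (by simp [h])⟩
  obtain ⟨x, hx, rfl⟩ := mem_map.mp hy
  exact (hσ ⟨x, hx⟩) ▸ (e ⟨x, hx⟩).2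

section Survival

variable {Ω : Type*} {ι : Type*} {κ : ι → Type*}

def survivalEvent (T : ∀ l, κ l → Ω → ℝ) (t : ℝ) (K : ∀ l, Finset (κ l)) : Set Ω :=
  ⋂ l, ⋂ r ∈ K l, {ω | t < T l r ω}

theorem survivalEvent_union [∀ l, DecidableEq (κ l)] (T : ∀ l, κ l → Ω → ℝ) (t : ℝ)
    (K K' : ∀ l, Finset (κ l)) :
    survivalEvent T t (fun l => K l ∪ K' l) =
      survivalEvent T t K ∩ ⋂ l, ⋂ r ∈ K' l, {ω | t < T l r ω} := by
  ext ω
  simp only [survivalEvent, Set.mem_iInter, Set.mem_inter_iff, mem_union, or_imp, forall_and]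

theorem setOf_eq_survivalEvent_inter_iInter_compl {L : ℕ} {n : Fin L → ℕ}
    (T : (l : Fin L) → Fin (n l) → Ω → ℝ) (i : Fin L) (hi : 1 ≤ n i) (t δ : ℝ)
    (m : Fin L → ℕ) :
    {ω | (∀ l, l ≠ i → ∀ j : Fin (n l),
              ((j : ℕ) < m l → t < T l j ω) ∧ (m l ≤ (j : ℕ) → T l j ω ≤ t))
          ∧ (∀ j : Fin (n i),
              ((j : ℕ) = 0 → t < T i j ω ∧ T i j ω ≤ t + δ)
              ∧ (1 ≤ (j : ℕ) ∧ (j : ℕ) ≤ m i → t < T i j ω)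
              ∧ (m i + 1 ≤ (j : ℕ) → T i j ω ≤ t))} =
      (survivalEvent T t (fun l => {r | (r : ℕ) < m l + if l = i then 1 else 0}) ∩
        {ω | T i ⟨0, hi⟩ ω ≤ t + δ}) ∩
      ⋂ l, ⋂ r ∈ ({r | (r : ℕ) < m l + if l = i then 1 else 0} : Finset (Fin (n l)))ᶜ,
        {ω | t < T l r ω}ᶜ := by
  ext ω
  simp only [survivalEvent, Set.mem_ofPred_eq, Set.mem_inter_iff, Set.mem_iInter, mem_compl,
    mem_filter, mem_univ, true_and, Set.mem_compl_iff, not_lt]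
  constructor
  · rintro ⟨hother, htype⟩
    refine ⟨⟨fun l r hr => ?_, ((htype _).1 rfl).2⟩, fun l r hr => ?_⟩
    · rcases eq_or_ne l i with rfl | hl
      · rcases Nat.eq_zero_or_pos r with h0 | h0
        · exact ((htype r).1 h0).1
        · exact (htype r).2.1 ⟨h0, by simp at hr; omega⟩
      · exact (hother l hl r).1 (by simpa [hl] using hr)
    · rcases eq_or_ne l i with rfl | hl
      · exact (htype r).2.2 (by simpa using hr)
      · exact (hother l hl r).2 (by simpa [hl] using hr)
  · rintro ⟨⟨halive, hz⟩, hdead⟩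
    refine ⟨fun l hl r => ⟨fun hr => halive l r (by simpa [hl] using hr),
      fun hr => hdead l r (by simpa [hl] using hr)⟩, fun r => ⟨fun h0 => ?_,
      fun hr => halive i r (by simp; omega), fun hr => hdead i r (by simpa using hr)⟩⟩
    obtain rfl : r = ⟨0, hi⟩ := Fin.ext h0
    exact ⟨halive i _ (by simp), hz⟩

variable [MeasurableSpace Ω]

theorem measurableSet_survivalEvent [Countable ι] {T : ∀ l, κ l → Ω → ℝ}
    (hT : ∀ l r, Measurable (T l r)) (t : ℝ) (K : ∀ l, Finset (κ l)) :
    MeasurableSet (survivalEvent T t K) :=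
  .iInter fun l => (K l).measurableSet_biInter fun r _ => measurableSet_lt measurable_const (hT l r)

end Survival

section Exchangeable

variable {Ω : Type*} [MeasurableSpace Ω] {ι : Type*} {κ : ι → Type*}

def Exchangeable (P : Measure Ω) (T : ∀ l, κ l → Ω → ℝ) : Prop :=
  ∀ σ : ∀ l, Equiv.Perm (κ l),
    P.map (fun ω l r => T l (σ l r) ω) = P.map (fun ω l r => T l r ω)

variable {P : Measure Ω} {T : ∀ l, κ l → Ω → ℝ}

theorem Exchangeable.measure_preimage_perm (h : Exchangeable P T)
    (hT : ∀ l r, Measurable (T l r)) (σ : ∀ l, Equiv.Perm (κ l)) {A : Set (∀ l, κ l → ℝ)}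
    (hA : MeasurableSet A) :
    P ((fun ω l r => T l (σ l r) ω) ⁻¹' A) = P ((fun ω l r => T l r ω) ⁻¹' A) := by
  rw [← Measure.map_apply (by fun_prop) hA, ← Measure.map_apply (by fun_prop) hA, h σ]

variable [Countable ι]

theorem Exchangeable.measure_survivalEvent_congr (h : Exchangeable P T)
    (hT : ∀ l r, Measurable (T l r)) (t : ℝ) {K K' : ∀ l, Finset (κ l)}
    (hK : ∀ l, #(K l) = #(K' l)) : P (survivalEvent T t K) = P (survivalEvent T t K') := by
  choose σ hσ using fun l => Equiv.Perm.exists_map_finset_eq (K l) (K' l) (hK l)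
  have hA : MeasurableSet (⋂ l, ⋂ r ∈ K l, {f : ∀ l, κ l → ℝ | t < f l r}) :=
    .iInter fun l => (K l).measurableSet_biInter fun r _ =>
      measurableSet_lt measurable_const (by fun_prop)
  convert (h.measure_preimage_perm hT σ hA).symm using 2 <;> ext ω
  · simp [survivalEvent]
  · simp [survivalEvent, ← hσ, -mem_map_equiv]

theorem Exchangeable.measure_survivalEvent_inter_congr [DecidableEq ι] (h : Exchangeable P T)
    (hT : ∀ l r, Measurable (T l r)) (t : ℝ) {K K' : ∀ l, Finset (κ l)}
    (hK : ∀ l, #(K l) = #(K' l)) {i : ι} {a b : κ i} (ha : a ∈ K i) (hb : b ∈ K' i) (s : ℝ) :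
    P (survivalEvent T t K ∩ {ω | s < T i a ω}) =
      P (survivalEvent T t K' ∩ {ω | s < T i b ω}) := by
  choose σ₀ hσ₀ using fun l => Equiv.Perm.exists_map_finset_eq (K l) (K' l) (hK l)
  obtain ⟨τ, hτa, hτ⟩ := Equiv.Perm.exists_apply_eq_and_map_finset_eq ha hb (hK i)
  set σ := Function.update σ₀ i τ
  have hσ (l : ι) : (K l).map (σ l).toEmbedding = K' l := by
    rcases eq_or_ne l i with rfl | hl
    · simpa [σ] using hτ
    · simpa [σ, hl] using hσ₀ l
  have hA : MeasurableSet ((⋂ l, ⋂ r ∈ K l, {f : ∀ l, κ l → ℝ | t < f l r}) ∩ {f | s < f i a}) :=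
    (MeasurableSet.iInter fun l => (K l).measurableSet_biInter fun r _ =>
      measurableSet_lt measurable_const (by fun_prop)).inter
      (measurableSet_lt measurable_const (by fun_prop))
  convert (h.measure_preimage_perm hT σ hA).symm using 2 <;> ext ω
  · simp [survivalEvent]
  · simp [survivalEvent, ← hσ, ← hτa, -mem_map_equiv, σ]

end Exchangeable

section Lifetimes

variable {Ω : Type*} [MeasurableSpace Ω] {P : Measure Ω} {L : ℕ} {n : Fin L → ℕ}
  {T : (l : Fin L) → Fin (n l) → Ω → ℝ}

theorem Exchangeable.measure_survivalEvent_eq_setOf (h : Exchangeable P T)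
    (hT : ∀ l r, Measurable (T l r)) (t : ℝ) {K : ∀ l, Finset (Fin (n l))} {k : Fin L → ℕ}
    (hK : ∀ l, #(K l) = k l) :
    P (survivalEvent T t K) = P {ω | ∀ l, ∀ r : Fin (n l), (r : ℕ) < k l → t < T l r ω} := by
  have hk (l : Fin L) : #(K l) = #({r : Fin (n l) | (r : ℕ) < k l}) := by
    rw [Fin.card_filter_val_lt, ← hK,
      min_eq_right ((card_le_univ _).trans_eq (Fintype.card_fin _))]
  rw [h.measure_survivalEvent_congr hT t hk]
  congr 1
  ext ω
  simp [survivalEvent]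

theorem Exchangeable.measure_survivalEvent_inter_eq_setOf (h : Exchangeable P T)
    (hT : ∀ l r, Measurable (T l r)) {t s : ℝ} (hts : t ≤ s) {K : ∀ l, Finset (Fin (n l))}
    {k : Fin L → ℕ} {i : Fin L} (hK : ∀ l, #(K l) = k l + if l = i then 1 else 0)
    {a : Fin (n i)} (ha : a ∈ K i) :
    P (survivalEvent T t K ∩ {ω | s < T i a ω}) =
      P {ω | (∀ l, ∀ r : Fin (n l), (r : ℕ) < k l → t < T l r ω)
        ∧ ∀ r : Fin (n i), (r : ℕ) = k i → s < T i r ω} := by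
  have hKle (l : Fin L) : k l + (if l = i then 1 else 0) ≤ n l :=
    hK l ▸ (card_le_univ _).trans_eq (Fintype.card_fin _)
  have hki : k i < n i := by simpa using hKle i
  have hk (l : Fin L) :
      #(K l) = #({r : Fin (n l) | (r : ℕ) < k l + if l = i then 1 else 0}) := by
    rw [Fin.card_filter_val_lt, hK, min_eq_right (hKle l)]
  rw [h.measure_survivalEvent_inter_congr hT t hk ha (b := ⟨k i, hki⟩) (by simp) s]
  congr 1
  ext ω
  simp only [survivalEvent, Set.mem_inter_iff, Set.mem_iInter, Set.mem_ofPred_eq, mem_filter,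
    mem_univ, true_and]
  constructor
  · rintro ⟨halive, hb⟩
    refine ⟨fun l r hr => halive l r (by omega), fun r hr => ?_⟩
    obtain rfl : r = ⟨k i, hki⟩ := Fin.ext hr
    exact hb
  · rintro ⟨halive, hb⟩
    refine ⟨fun l r hr => ?_, hb _ rfl⟩
    by_cases hlt : (r : ℕ) < k l
    · exact halive l r hlt
    · obtain rfl : l = i := by
        by_contra hl
        simp only [hl, if_false] at hr
        omega
      obtain rfl : r = ⟨k l, hki⟩ :=
        Fin.ext <| show (r : ℕ) = k l by simp only [if_true] at hr; omega
      exact hts.trans_lt (hb _ rfl)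

theorem Exchangeable.measureReal_survivalEvent_inter_setOf_le [IsFiniteMeasure P]
    (h : Exchangeable P T) (hT : ∀ l r, Measurable (T l r)) {t δ : ℝ} (hδ : 0 ≤ δ)
    {K : ∀ l, Finset (Fin (n l))} {k : Fin L → ℕ} {i : Fin L}
    (hK : ∀ l, #(K l) = k l + if l = i then 1 else 0) {a : Fin (n i)} (ha : a ∈ K i) :
    P.real (survivalEvent T t K ∩ {ω | T i a ω ≤ t + δ}) =
      P.real {ω | ∀ l, ∀ r : Fin (n l), (r : ℕ) < k l + (if l = i then 1 else 0) → t < T l r ω}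
        - P.real {ω | (∀ l, ∀ r : Fin (n l), (r : ℕ) < k l → t < T l r ω)
          ∧ ∀ r : Fin (n i), (r : ℕ) = k i → t + δ < T i r ω} := by
  rw [measureReal_inter_setOf_le _ _ (hT i a), measureReal_def, measureReal_def,
    h.measure_survivalEvent_eq_setOf hT t hK,
    h.measure_survivalEvent_inter_eq_setOf hT (le_add_of_nonneg_right hδ) hK ha,
    measureReal_def, measureReal_def]

end Lifetimes

theorem stmt_0_general
    {Ω : Type*} [MeasurableSpace Ω] (P : Measure Ω) [IsProbabilityMeasure P]
    {L : ℕ} (n : Fin L → ℕ) (hn : ∀ l, 1 ≤ n l)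
    (T : (l : Fin L) → Fin (n l) → Ω → ℝ)
    (hTmeas : ∀ l j, Measurable (T l j))
    (hexch : ∀ σ : (l : Fin L) → Equiv.Perm (Fin (n l)),
      Measure.map (fun ω (l : Fin L) (j : Fin (n l)) => T l (σ l j) ω) P
        = Measure.map (fun ω (l : Fin L) (j : Fin (n l)) => T l j ω) P)
    (i : Fin L) (t δ : ℝ) (hδ : 0 < δ)
    (m : Fin L → ℕ) (hm : ∀ l, l ≠ i → m l ≤ n l) (hmi : m i ≤ n i - 1) :
    (P {ω | (∀ l, l ≠ i → ∀ j : Fin (n l),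
              ((j : ℕ) < m l → t < T l j ω) ∧ (m l ≤ (j : ℕ) → T l j ω ≤ t))
          ∧ (∀ j : Fin (n i),
              ((j : ℕ) = 0 → t < T i j ω ∧ T i j ω ≤ t + δ)
              ∧ (1 ≤ (j : ℕ) ∧ (j : ℕ) ≤ m i → t < T i j ω)
              ∧ (m i + 1 ≤ (j : ℕ) → T i j ω ≤ t))}).toReal
    = ∑ j : (l : Fin L) → Fin ((if l = i then n i - m i - 1 else n l - m l) + 1),
        (-1 : ℝ) ^ (∑ l, (j l : ℕ))
          * (∏ l, (Nat.choose (if l = i then n i - m i - 1 else n l - m l) (j l) : ℝ))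
          * ((P {ω | ∀ l, ∀ r : Fin (n l),
                (r : ℕ) < m l + (j l : ℕ) + (if l = i then 1 else 0) → t < T l r ω}).toReal
            - (P {ω | (∀ l, ∀ r : Fin (n l), (r : ℕ) < m l + (j l : ℕ) → t < T l r ω)
                ∧ (∀ r : Fin (n i), (r : ℕ) = m i + (j i : ℕ) → t + δ < T i r ω)}).toReal) := by
  classical
  have hexch : Exchangeable P T := hexch
  set Base : ∀ l, Finset (Fin (n l)) := fun l => {r | (r : ℕ) < m l + if l = i then 1 else 0}
  have hBase (l : Fin L) : #(Base l) = m l + if l = i then 1 else 0 := by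
    rw [Fin.card_filter_val_lt, min_eq_right]
    rcases eq_or_ne l i with rfl | hl
    · simp only [if_true]; have := hn l; omega
    · simpa [hl] using hm l hl
  have hFail (l : Fin L) : #(Base l)ᶜ = if l = i then n i - m i - 1 else n l - m l := by
    rw [card_compl, Fintype.card_fin, hBase]
    rcases eq_or_ne l i with rfl | hl
    · simp only [if_true]; omega
    · simp [hl]
  have hsurvivors (S : ∀ l, Finset (Fin (n l)))
      (hS : S ∈ Fintype.piFinset fun l => (Base l)ᶜ.powerset) (l : Fin L) :
      #(Base l ∪ S l) = m l + #(S l) + if l = i then 1 else 0 := by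
    rw [card_union_of_disjoint (disjoint_of_subset_right
      (mem_powerset.mp (Fintype.mem_piFinset.mp hS l)) disjoint_compl_right), hBase]
    ring
  simp only [← measureReal_def]
  rw [setOf_eq_survivalEvent_inter_iInter_compl T i (hn i) t δ m,
    measureReal_inter_iInter_compl_eq_sum P ((measurableSet_survivalEvent hTmeas t Base).inter
      (measurableSet_le (hTmeas i _) measurable_const))
      (fun l r => measurableSet_lt measurable_const (hTmeas l r)) (fun l => (Base l)ᶜ)]
  rw [sum_congr rfl fun S hS => by
    rw [Set.inter_right_comm, ← survivalEvent_union, hexch.measureReal_survivalEvent_inter_setOf_le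
      hTmeas hδ.le (hsurvivors S hS) (mem_union_left _ (by simp [Base]))]]
  rw [sum_piFinset_powerset_eq_sum_choose (fun l => (Base l)ᶜ) hFail fun v =>
    (-1 : ℝ) ^ (∑ l, v l) *
      (P.real {ω | ∀ l, ∀ r : Fin (n l), (r : ℕ) < m l + v l + (if l = i then 1 else 0) →
          t < T l r ω}
        - P.real {ω | (∀ l, ∀ r : Fin (n l), (r : ℕ) < m l + v l → t < T l r ω)
          ∧ ∀ r : Fin (n i), (r : ℕ) = m i + v i → t + δ < T i r ω})]
  exact sum_congr rfl fun j _ => by ring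

/-- Under within-type exchangeability, the probability `A` that,
at time `t`, exactly the first `m_l` components of each type `l ≠ i` are alive and the
rest have failed, while for type `i` the first component fails in `(t, t+δ]`, the next
`m_i` components are alive and the remaining ones have failed, admits the
inclusion–exclusion representation in terms of the joint survival probabilities `S`. -/
theorem stmt_0
    {Ω : Type*} [MeasurableSpace Ω] (P : Measure Ω) [IsProbabilityMeasure P]
    {L : ℕ} (hL : 1 ≤ L) (n : Fin L → ℕ) (hn : ∀ l, 1 ≤ n l)
    (T : (l : Fin L) → Fin (n l) → Ω → ℝ)
    (hTmeas : ∀ l j, Measurable (T l j))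
    (hexch : ∀ σ : (l : Fin L) → Equiv.Perm (Fin (n l)),
      Measure.map (fun ω (l : Fin L) (j : Fin (n l)) => T l (σ l j) ω) P
        = Measure.map (fun ω (l : Fin L) (j : Fin (n l)) => T l j ω) P)
    (i : Fin L) (t δ : ℝ) (ht : 0 ≤ t) (hδ : 0 < δ)
    (m : Fin L → ℕ) (hm : ∀ l, l ≠ i → m l ≤ n l) (hmi : m i ≤ n i - 1) :
    (P {ω | (∀ l, l ≠ i → ∀ j : Fin (n l),
              ((j : ℕ) < m l → t < T l j ω) ∧ (m l ≤ (j : ℕ) → T l j ω ≤ t))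
          ∧ (∀ j : Fin (n i),
              ((j : ℕ) = 0 → t < T i j ω ∧ T i j ω ≤ t + δ)
              ∧ (1 ≤ (j : ℕ) ∧ (j : ℕ) ≤ m i → t < T i j ω)
              ∧ (m i + 1 ≤ (j : ℕ) → T i j ω ≤ t))}).toReal
    = ∑ j : (l : Fin L) → Fin ((if l = i then n i - m i - 1 else n l - m l) + 1),
        (-1 : ℝ) ^ (∑ l, (j l : ℕ))
          * (∏ l, (Nat.choose (if l = i then n i - m i - 1 else n l - m l) (j l) : ℝ))
          * ((P {ω | ∀ l, ∀ r : Fin (n l),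
                (r : ℕ) < m l + (j l : ℕ) + (if l = i then 1 else 0) → t < T l r ω}).toReal
            - (P {ω | (∀ l, ∀ r : Fin (n l), (r : ℕ) < m l + (j l : ℕ) → t < T l r ω)
                ∧ (∀ r : Fin (n i), (r : ℕ) = m i + (j i : ℕ) → t + δ < T i r ω)}).toReal) :=
  stmt_0_general P n hn T hTmeas hexch i t δ hδ m hm hmi
end

section
/- Under within-type exchangeability, for every type i ∈ {1,…,L}, every t ≥ 0 and every δ > 0: Σ_{r=1}^{n_i} P( T > t and t < T^{(i)}_r ≤ t+δ ) = n_i Σ_{m} Φ(m_1,…,m_{i−1}, m_i+1, m_{i+1},…,m_L) · (∏_{l≠i} C(n_l, m_l)) · C(n_i−1, m_i) · A_m^{(i)}(t,δ), where the sum is over all count vectors m with 0 ≤ m_l ≤ n_l for l ≠ i and 0 ≤ m_i ≤ n_i−1, and A_m^{(i)}(t,δ) := P( for each l ≠ i: T^{(l)}_j > t for 1 ≤ j ≤ m_l and T^{(l)}_j ≤ t for m_l < j ≤ n_l; and for type i: t < T^{(i)}_1 ≤ t+δ, T^{(i)}_j > t for 2 ≤ j ≤ m_i+1, and T^{(i)}_j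 ≤ t for m_i+1 < j ≤ n_i ). -/
/-!
Push the lifetimes forward to an exchangeable law `μ` on configurations `a : ∏ₗ ℝ^{n_l}`.
Splitting the event `{T > t, t < T^{(i)}_r ≤ t + δ}` by the state vector `x` at time `t` gives
`Σ_{x : φ x, x_{i,r} = 1} μ(X(t) = x, a_{i,r} ≤ t + δ)`. A within-type permutation carrying `x`
to the state in which exactly the first `m_l` components of each type `l ≠ i` and the first
`m_i + 1` of type `i` work, and carrying `r` to the first component of type `i`, shows that each
term equals `A_m`. Summing over `r` contributes the factor `m_i + 1`; grouping states by their
counts produces `Φ(m + e_i) · ∏ₗ C(n_l, m_l + [l = i])`, and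
`n_i C(n_i - 1, m_i) = (m_i + 1) C(n_i, m_i + 1)` converts this into the stated weights.
-/

open MeasureTheory Finset

/-- The survival signature of a structure function `φ`:
`Φ(c) = (∏_k C(n_k, c_k))⁻¹ · Σ_{x : exactly c_k working components of each type k} φ(x)`. -/
noncomputable def survSig {L : ℕ} (n : Fin L → ℕ)
    (φ : ((l : Fin L) → Fin (n l) → Bool) → Bool) (c : Fin L → ℕ) : ℝ :=
  (∑ x : (l : Fin L) → Fin (n l) → Bool,
      if (∀ l, (Finset.univ.filter fun j => x l j = true).card = c l) ∧ φ x = true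
      then (1 : ℝ) else 0)
    / ∏ l, (Nat.choose (n l) (c l) : ℝ)

namespace Equiv.Perm

variable {α : Type*} [Fintype α] [DecidableEq α] {u v : α → Bool}

theorem exists_comp_eq_of_card_eq (h : #{a | u a = true} = #{a | v a = true}) :
    ∃ σ : Perm α, ∀ b, u (σ b) = v b := by
  have hfib : ∀ c, Fintype.card {b // v b = c} = Fintype.card {a // u a = c} := by
    have hfalse : ∀ w : α → Bool, #{a | w a = false} = Fintype.card α - #{a | w a = true} := by
      intro w
      simp only [← Bool.not_eq_true, Finset.filter_not, Finset.card_sdiff_of_subset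
        (Finset.filter_subset _ _), Finset.card_univ]
    rintro (_ | _) <;> simp only [Fintype.card_subtype, hfalse, h]
  exact ⟨ofFiberEquiv fun c => Fintype.equivOfCardEq (hfib c), ofFiberEquiv_map _⟩

theorem exists_comp_eq_of_card_eq_of_apply (h : #{a | u a = true} = #{a | v a = true})
    {a₀ b₀ : α} (ha₀ : u a₀ = true) (hb₀ : v b₀ = true) :
    ∃ σ : Perm α, (∀ b, u (σ b) = v b) ∧ σ b₀ = a₀ := by
  obtain ⟨σ, hσ⟩ := exists_comp_eq_of_card_eq h
  have hswap : ∀ a, u (swap (σ b₀) a₀ a) = u a := by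
    intro a
    rcases eq_or_ne a (σ b₀) with rfl | h₁
    · rw [swap_apply_left, ha₀, hσ, hb₀]
    rcases eq_or_ne a a₀ with rfl | h₂
    · rw [swap_apply_right, ha₀, hσ, hb₀]
    · rw [swap_apply_of_ne_of_ne h₁ h₂]
  exact ⟨σ.trans (swap (σ b₀) a₀), fun b => by simp [hswap, hσ], by simp⟩

end Equiv.Perm

namespace SurvivalSignature

variable {L : ℕ} {n : Fin L → ℕ}

def permute {α : Type*} (σ : (l : Fin L) → Equiv.Perm (Fin (n l)))
    (x : (l : Fin L) → Fin (n l) → α) : (l : Fin L) → Fin (n l) → α :=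
  fun l j => x l (σ l j)

noncomputable def stateAt (t : ℝ) (a : (l : Fin L) → Fin (n l) → ℝ) :
    (l : Fin L) → Fin (n l) → Bool :=
  fun l j => decide (t < a l j)

def stateEvent (t s : ℝ) (i : Fin L) (x : (l : Fin L) → Fin (n l) → Bool) (r : Fin (n i)) :
    Set ((l : Fin L) → Fin (n l) → ℝ) :=
  {a | stateAt t a = x ∧ a i r ≤ s}

def workingCount (x : (l : Fin L) → Fin (n l) → Bool) (l : Fin L) : ℕ :=
  #{j | x l j = true}

def prefixState (c : Fin L → ℕ) : (l : Fin L) → Fin (n l) → Bool :=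
  fun l j => decide ((j : ℕ) < c l)

theorem permute_injective {α : Type*} (σ : (l : Fin L) → Equiv.Perm (Fin (n l))) :
    Function.Injective (permute (α := α) σ) := by
  intro x y h
  funext l j
  simpa [permute] using congrFun (congrFun h l) ((σ l).symm j)

theorem stateAt_permute (t : ℝ) (σ : (l : Fin L) → Equiv.Perm (Fin (n l)))
    (a : (l : Fin L) → Fin (n l) → ℝ) : stateAt t (permute σ a) = permute σ (stateAt t a) :=
  rfl

theorem measurable_permute {α : Type*} [MeasurableSpace α]
    (σ : (l : Fin L) → Equiv.Perm (Fin (n l))) : Measurable (permute (α := α) σ) := by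
  unfold permute; fun_prop

theorem measurable_stateAt (t : ℝ) : Measurable (stateAt (n := n) t) := by
  refine measurable_pi_lambda _ fun l => measurable_pi_lambda _ fun j => measurable_to_bool ?_
  simpa [stateAt, Set.preimage] using measurableSet_lt measurable_const (by fun_prop)

theorem measurableSet_stateEvent (t s : ℝ) (i : Fin L) (x : (l : Fin L) → Fin (n l) → Bool)
    (r : Fin (n i)) : MeasurableSet (stateEvent t s i x r) :=
  (measurable_stateAt t (measurableSet_singleton x)).inter
    (measurableSet_le (f := fun a : (l : Fin L) → Fin (n l) → ℝ => a i r) (by fun_prop)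
      measurable_const)

theorem stateAt_eq_prefixState_iff {t : ℝ} {a : (l : Fin L) → Fin (n l) → ℝ} {c : Fin L → ℕ} :
    stateAt t a = prefixState c ↔ ∀ l j, (t < a l j ↔ (j : ℕ) < c l) := by
  simp [funext_iff, stateAt, prefixState]

theorem stateEvent_prefixState_eq (i : Fin L) (hni : 0 < n i) (t s : ℝ) (c : Fin L → ℕ) :
    stateEvent t s i (prefixState fun l => c l + if l = i then 1 else 0) ⟨0, hni⟩
      = {a | (∀ l, l ≠ i → ∀ j : Fin (n l),
              ((j : ℕ) < c l → t < a l j) ∧ (c l ≤ (j : ℕ) → a l j ≤ t))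
          ∧ (∀ j : Fin (n i),
              ((j : ℕ) = 0 → t < a i j ∧ a i j ≤ s)
              ∧ (1 ≤ (j : ℕ) ∧ (j : ℕ) ≤ c i → t < a i j)
              ∧ (c i + 1 ≤ (j : ℕ) → a i j ≤ t))} := by
  ext a
  simp only [stateEvent, stateAt_eq_prefixState_iff, Set.mem_ofPred_eq]
  constructor
  · rintro ⟨h, hs⟩
    refine ⟨fun l hl j => ?_, fun j => ?_⟩
    · have := h l j
      simp only [hl, if_false, add_zero] at this
      grind
    · have := h i j
      simp only [if_true] at this
      have h0 : (j : ℕ) = 0 → j = ⟨0, hni⟩ := fun hj => Fin.ext hj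
      grind
  · rintro ⟨h, hs⟩
    refine ⟨fun l j => ?_, ((hs ⟨0, hni⟩).1 rfl).2⟩
    rcases eq_or_ne l i with rfl | hl
    · have := hs j
      simp only [if_true]
      grind
    · have := h l hl j
      simp only [hl, if_false, add_zero]
      grind

theorem setOf_works_and_fails_eq_biUnion (φ : ((l : Fin L) → Fin (n l) → Bool) → Bool)
    (t s : ℝ) (i : Fin L) (r : Fin (n i)) :
    {a : (l : Fin L) → Fin (n l) → ℝ | φ (stateAt t a) = true ∧ t < a i r ∧ a i r ≤ s}
      = ⋃ x ∈ ({x | φ x = true ∧ x i r = true} : Finset _), stateEvent t s i x r := by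
  ext a
  simp [stateEvent, stateAt, and_assoc]

theorem workingCount_le (x : (l : Fin L) → Fin (n l) → Bool) (l : Fin L) :
    workingCount x l ≤ n l :=
  (card_filter_le _ _).trans (by simp)

theorem workingCount_prefixState {c : Fin L → ℕ} {l : Fin L} (hc : c l ≤ n l) :
    workingCount (prefixState (n := n) c) l = c l := by
  simp [workingCount, prefixState, Fin.card_filter_val_lt, hc]

theorem exists_permute_eq {x y : (l : Fin L) → Fin (n l) → Bool}
    (hxy : ∀ l, workingCount x l = workingCount y l) {i : Fin L} {r r' : Fin (n i)}
    (hx : x i r = true) (hy : y i r' = true) :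
    ∃ σ : (l : Fin L) → Equiv.Perm (Fin (n l)), permute σ x = y ∧ σ i r' = r := by
  choose σ hσ using fun l => Equiv.Perm.exists_comp_eq_of_card_eq (hxy l)
  obtain ⟨σi, hσi, hσir⟩ := Equiv.Perm.exists_comp_eq_of_card_eq_of_apply (hxy i) hx hy
  refine ⟨Function.update σ i σi, ?_, by simpa using hσir⟩
  funext l j
  rcases eq_or_ne l i with rfl | hl
  · simpa [permute] using hσi j
  · simpa [permute, hl] using hσ l j

/-- The paper's `m` attached to a state `x`: its count vector minus `e_i`. The truncated
subtraction at a state with no working component of type `i` is harmless, as such states carry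
the weight `workingCount x i = 0`. -/
def reducedCount (i : Fin L) (x : (l : Fin L) → Fin (n l) → Bool) (l : Fin L) :
    Fin ((if l = i then n i - 1 else n l) + 1) :=
  ⟨workingCount x l - if l = i then 1 else 0, by
    have := workingCount_le x l
    split_ifs with h
    · subst h; omega
    · omega⟩

theorem workingCount_eq_iff_reducedCount_eq {x : (l : Fin L) → Fin (n l) → Bool} {i : Fin L}
    (hx : 0 < workingCount x i) (m : (l : Fin L) → Fin ((if l = i then n i - 1 else n l) + 1)) :
    (∀ l, workingCount x l = (m l : ℕ) + if l = i then 1 else 0) ↔ reducedCount i x = m := by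
  simp only [funext_iff]
  refine forall_congr' fun l => ?_
  rw [Fin.ext_iff (a := reducedCount i x l)]
  simp only [reducedCount]
  split_ifs with h
  · subst h; omega
  · omega

theorem val_add_ite_le {i : Fin L} (hni : 0 < n i)
    (m : (l : Fin L) → Fin ((if l = i then n i - 1 else n l) + 1)) (l : Fin L) :
    (m l : ℕ) + (if l = i then 1 else 0) ≤ n l := by
  have := (m l).isLt
  split_ifs at * with h
  · subst h; omega
  · omega

theorem sum_ite_workingCount_mul (φ : ((l : Fin L) → Fin (n l) → Bool) → Bool) (i : Fin L)
    (A : ((l : Fin L) → Fin ((if l = i then n i - 1 else n l) + 1)) → ℝ) :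
    ∑ x, (if φ x = true then (workingCount x i : ℝ) * A (reducedCount i x) else 0)
      = ∑ m, ((m i : ℕ) + 1 : ℝ) * A m *
          ∑ x : (l : Fin L) → Fin (n l) → Bool,
            if (∀ l, workingCount x l = (m l : ℕ) + if l = i then 1 else 0) ∧ φ x = true
            then 1 else 0 := by
  rw [← Finset.sum_fiberwise _ (reducedCount i)]
  refine Finset.sum_congr rfl fun m _ => ?_
  rw [Finset.mul_sum]
  refine (Finset.sum_congr rfl fun x hx => ?_).trans (Finset.sum_filter_of_ne fun x _ hx => ?_)
  · obtain rfl := (Finset.mem_filter.1 hx).2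
    rcases Nat.eq_zero_or_pos (workingCount x i) with h0 | hpos
    · have : ¬ ∀ l, workingCount x l = (reducedCount i x l : ℕ) + if l = i then 1 else 0 :=
        fun h => by simpa [h0] using h i
      simp [h0, this]
    · have hc := (workingCount_eq_iff_reducedCount_eq hpos _).2 rfl
      by_cases hφ : φ x = true <;> simp [hφ, hc]
  · by_cases h : (∀ l, workingCount x l = (m l : ℕ) + if l = i then 1 else 0) ∧ φ x = true
    · exact (workingCount_eq_iff_reducedCount_eq (by simp [h.1 i]) m).1 h.1
    · simp [h] at hx

theorem mul_choose_pred_eq (N k : ℕ) : N * (N - 1).choose k = (k + 1) * N.choose (k + 1) := by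
  cases N with
  | zero => simp
  | succ N => rw [Nat.add_sub_cancel, Nat.add_one_mul_choose_eq, mul_comm]

theorem mul_prod_choose_eq (n : Fin L → ℕ) (i : Fin L) (m : Fin L → ℕ) :
    n i * ∏ l, (if l = i then n i - 1 else n l).choose (m l)
      = (m i + 1) * ∏ l, (n l).choose (m l + if l = i then 1 else 0) := by
  have hrest : ∀ l ∈ univ.erase i, (if l = i then n i - 1 else n l).choose (m l)
      = (n l).choose (m l + if l = i then 1 else 0) := fun l hl => by
    simp [ne_of_mem_erase hl]
  rw [← Finset.mul_prod_erase _ _ (mem_univ i), ← Finset.mul_prod_erase _ _ (mem_univ i),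
    Finset.prod_congr rfl hrest, ← mul_assoc, ← mul_assoc, if_pos rfl, if_pos rfl,
    mul_choose_pred_eq]

theorem survSig_mul_prod_choose (φ : ((l : Fin L) → Fin (n l) → Bool) → Bool) {c : Fin L → ℕ}
    (hc : ∀ l, c l ≤ n l) :
    survSig n φ c * ∏ l, ((n l).choose (c l) : ℝ)
      = ∑ x, if (∀ l, workingCount x l = c l) ∧ φ x = true then 1 else 0 := by
  rw [survSig, div_mul_cancel₀]
  · rfl
  · exact Finset.prod_ne_zero_iff.2 fun l _ => by exact_mod_cast (Nat.choose_pos (hc l)).ne'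

section Exchangeable

variable {μ : Measure ((l : Fin L) → Fin (n l) → ℝ)}

theorem measure_stateEvent_permute {σ : (l : Fin L) → Equiv.Perm (Fin (n l))}
    (hσ : MeasurePreserving (permute σ) μ μ) (t s : ℝ) (i : Fin L)
    (x : (l : Fin L) → Fin (n l) → Bool) (r : Fin (n i)) :
    μ (stateEvent t s i (permute σ x) r) = μ (stateEvent t s i x (σ i r)) := by
  have hpre : permute σ ⁻¹' stateEvent t s i (permute σ x) r = stateEvent t s i x (σ i r) := by
    ext a
    simp [stateEvent, stateAt_permute, (permute_injective σ).eq_iff, permute]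
  rw [← hpre, hσ.measure_preimage (measurableSet_stateEvent ..).nullMeasurableSet]

theorem measure_stateEvent_eq_of_workingCount_eq
    (hμ : ∀ σ, MeasurePreserving (permute σ) μ μ) (t s : ℝ)
    {x y : (l : Fin L) → Fin (n l) → Bool} (hxy : ∀ l, workingCount x l = workingCount y l)
    {i : Fin L} {r r' : Fin (n i)} (hx : x i r = true) (hy : y i r' = true) :
    μ (stateEvent t s i x r) = μ (stateEvent t s i y r') := by
  obtain ⟨σ, rfl, rfl⟩ := exists_permute_eq hxy hx hy
  exact (measure_stateEvent_permute (hμ σ) t s i x r').symm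

theorem measureReal_works_and_fails [IsFiniteMeasure μ]
    (φ : ((l : Fin L) → Fin (n l) → Bool) → Bool)
    (t s : ℝ) (i : Fin L) (r : Fin (n i)) :
    μ.real {a | φ (stateAt t a) = true ∧ t < a i r ∧ a i r ≤ s}
      = ∑ x, if φ x = true ∧ x i r = true then μ.real (stateEvent t s i x r) else 0 := by
  rw [setOf_works_and_fails_eq_biUnion, measureReal_biUnion_finset, Finset.sum_filter]
  · intro x _ y _ hxy
    exact Set.disjoint_left.2 fun a hx hy => hxy (hx.1.symm.trans hy.1)
  · exact fun x _ => measurableSet_stateEvent ..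

theorem sum_measureReal_works_and_fails [IsFiniteMeasure μ]
    (hμ : ∀ σ, MeasurePreserving (permute σ) μ μ)
    (φ : ((l : Fin L) → Fin (n l) → Bool) → Bool) (i : Fin L) (hni : 0 < n i) (t s : ℝ) :
    ∑ r : Fin (n i), μ.real {a | φ (stateAt t a) = true ∧ t < a i r ∧ a i r ≤ s}
      = (n i : ℝ) * ∑ m : (l : Fin L) → Fin ((if l = i then n i - 1 else n l) + 1),
          survSig n φ (fun l => (m l : ℕ) + if l = i then 1 else 0)
            * (∏ l, (Nat.choose (if l = i then n i - 1 else n l) (m l) : ℝ))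
            * μ.real (stateEvent t s i
                (prefixState fun l => (m l : ℕ) + if l = i then 1 else 0) ⟨0, hni⟩) := by
  set A := fun m : (l : Fin L) → Fin ((if l = i then n i - 1 else n l) + 1) =>
    μ.real (stateEvent t s i (prefixState fun l => (m l : ℕ) + if l = i then 1 else 0) ⟨0, hni⟩)
  have hstate : ∀ x r, x i r = true → μ.real (stateEvent t s i x r) = A (reducedCount i x) := by
    intro x r hxr
    have hpos : 0 < workingCount x i := card_pos.2 ⟨r, by simpa using hxr⟩
    have hcount := (workingCount_eq_iff_reducedCount_eq hpos _).2 rfl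
    refine congrArg ENNReal.toReal (measure_stateEvent_eq_of_workingCount_eq hμ t s
      (fun l => ?_) hxr (by simp [prefixState]))
    rw [workingCount_prefixState (val_add_ite_le hni _ l), hcount]
  calc ∑ r : Fin (n i), μ.real {a | φ (stateAt t a) = true ∧ t < a i r ∧ a i r ≤ s}
      = ∑ r : Fin (n i), ∑ x,
          if φ x = true ∧ x i r = true then A (reducedCount i x) else 0 := by
        refine Finset.sum_congr rfl fun r _ => ?_
        rw [measureReal_works_and_fails]
        refine Finset.sum_congr rfl fun x _ => ?_
        split_ifs with h
        exacts [hstate x r h.2, rfl]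
    _ = ∑ x, if φ x = true then (workingCount x i : ℝ) * A (reducedCount i x) else 0 := by
        rw [Finset.sum_comm]
        refine Finset.sum_congr rfl fun x _ => ?_
        by_cases hφ : φ x = true
        · simp only [hφ, true_and, if_true, ← Finset.sum_filter, Finset.sum_const, nsmul_eq_mul,
            workingCount]
        · simp [hφ]
    _ = _ := by
        rw [sum_ite_workingCount_mul, Finset.mul_sum]
        refine Finset.sum_congr rfl fun m _ => ?_
        rw [← survSig_mul_prod_choose φ (val_add_ite_le hni m)]
        have hchoose : (n i : ℝ) * ∏ l, ((if l = i then n i - 1 else n l).choose (m l) : ℝ)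
            = ((m i : ℕ) + 1) * ∏ l, ((n l).choose ((m l : ℕ) + if l = i then 1 else 0) : ℝ) := by
          exact_mod_cast mul_prod_choose_eq n i (fun l => m l)
        linear_combination (survSig n φ (fun l => (m l : ℕ) + if l = i then 1 else 0) * A m)
          * hchoose.symm

end Exchangeable

end SurvivalSignature

open SurvivalSignature

theorem stmt_3_general
    {Ω : Type*} [MeasurableSpace Ω] (P : Measure Ω) [IsProbabilityMeasure P]
    {L : ℕ} (n : Fin L → ℕ)
    (T : (l : Fin L) → Fin (n l) → Ω → ℝ)
    (hTmeas : ∀ l j, Measurable (T l j))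
    (hexch : ∀ σ : (l : Fin L) → Equiv.Perm (Fin (n l)),
      Measure.map (fun ω (l : Fin L) (j : Fin (n l)) => T l (σ l j) ω) P
        = Measure.map (fun ω (l : Fin L) (j : Fin (n l)) => T l j ω) P)
    (φ : ((l : Fin L) → Fin (n l) → Bool) → Bool)
    (Tsys : Ω → ℝ)
    (hT : ∀ t : ℝ, 0 ≤ t →
      {ω | t < Tsys ω} = {ω | φ (fun l j => decide (t < T l j ω)) = true})
    (i : Fin L) (t δ : ℝ) (ht : 0 ≤ t) :
    ∑ r : Fin (n i),
        (P {ω | t < Tsys ω ∧ t < T i r ω ∧ T i r ω ≤ t + δ}).toReal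
    = (n i : ℝ) *
      ∑ m : (l : Fin L) → Fin ((if l = i then n i - 1 else n l) + 1),
        survSig n φ (fun l => (m l : ℕ) + if l = i then 1 else 0)
          * (∏ l, (Nat.choose (if l = i then n i - 1 else n l) (m l) : ℝ))
          * (P {ω | (∀ l, l ≠ i → ∀ j : Fin (n l),
                ((j : ℕ) < (m l : ℕ) → t < T l j ω) ∧ ((m l : ℕ) ≤ (j : ℕ) → T l j ω ≤ t))
              ∧ (∀ j : Fin (n i),
                ((j : ℕ) = 0 → t < T i j ω ∧ T i j ω ≤ t + δ)
                ∧ (1 ≤ (j : ℕ) ∧ (j : ℕ) ≤ (m i : ℕ) → t < T i j ω)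
                ∧ ((m i : ℕ) + 1 ≤ (j : ℕ) → T i j ω ≤ t))}).toReal := by
  rcases (n i).eq_zero_or_pos with hni | hni
  · have : IsEmpty (Fin (n i)) := by rw [hni]; infer_instance
    simp [hni]
  set X : Ω → (l : Fin L) → Fin (n l) → ℝ := fun ω l j => T l j ω
  have hX : Measurable X := measurable_pi_lambda _ fun l => measurable_pi_lambda _ (hTmeas l)
  have hμ : ∀ σ, MeasurePreserving (permute σ) (P.map X) (P.map X) := fun σ =>
    ⟨measurable_permute σ, by rw [Measure.map_map (measurable_permute σ) hX]; exact hexch σ⟩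
  have hworks : ∀ r : Fin (n i), (P {ω | t < Tsys ω ∧ t < T i r ω ∧ T i r ω ≤ t + δ}).toReal
      = (P.map X).real {a | φ (stateAt t a) = true ∧ t < a i r ∧ a i r ≤ t + δ} := by
    intro r
    have hsys : ∀ ω, t < Tsys ω ↔ φ (stateAt t (X ω)) = true := Set.ext_iff.1 (hT t ht)
    rw [map_measureReal_apply hX (by
      rw [setOf_works_and_fails_eq_biUnion]
      exact Finset.measurableSet_biUnion _ fun x _ => measurableSet_stateEvent ..)]
    simp only [Set.preimage_ofPred_eq, hsys]
    rfl
  rw [Finset.sum_congr rfl fun r _ => hworks r, sum_measureReal_works_and_fails hμ φ i hni]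
  refine congrArg _ (Finset.sum_congr rfl fun m _ => congrArg _ ?_)
  rw [map_measureReal_apply hX (measurableSet_stateEvent ..), stateEvent_prefixState_eq]
  rfl

/-- (Lemma on `Σ_r P(T > t, t < T^{(i)}_r ≤ t+δ)`.) Under within-type
exchangeability, the sum over the type-`i` components of the probability that the system
survives `t` and that component fails in `(t, t+δ]` equals `n_i` times the survival-signature
weighted sum of the ordered-configuration probabilities `A_m^{(i)}(t,δ)`. -/
theorem stmt_3
    {Ω : Type*} [MeasurableSpace Ω] (P : Measure Ω) [IsProbabilityMeasure P]
    {L : ℕ} (hL : 1 ≤ L) (n : Fin L → ℕ) (hn : ∀ l, 1 ≤ n l)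
    (T : (l : Fin L) → Fin (n l) → Ω → ℝ)
    (hTmeas : ∀ l j, Measurable (T l j))
    (hexch : ∀ σ : (l : Fin L) → Equiv.Perm (Fin (n l)),
      Measure.map (fun ω (l : Fin L) (j : Fin (n l)) => T l (σ l j) ω) P
        = Measure.map (fun ω (l : Fin L) (j : Fin (n l)) => T l j ω) P)
    (φ : ((l : Fin L) → Fin (n l) → Bool) → Bool) (hφ : Monotone φ)
    (Tsys : Ω → ℝ) (hTsys : Measurable Tsys)
    (hT : ∀ t : ℝ, 0 ≤ t →
      {ω | t < Tsys ω} = {ω | φ (fun l j => decide (t < T l j ω)) = true})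
    (i : Fin L) (t δ : ℝ) (ht : 0 ≤ t) (hδ : 0 < δ) :
    ∑ r : Fin (n i),
        (P {ω | t < Tsys ω ∧ t < T i r ω ∧ T i r ω ≤ t + δ}).toReal
    = (n i : ℝ) *
      ∑ m : (l : Fin L) → Fin ((if l = i then n i - 1 else n l) + 1),
        survSig n φ (fun l => (m l : ℕ) + if l = i then 1 else 0)
          * (∏ l, (Nat.choose (if l = i then n i - 1 else n l) (m l) : ℝ))
          * (P {ω | (∀ l, l ≠ i → ∀ j : Fin (n l),
                ((j : ℕ) < (m l : ℕ) → t < T l j ω) ∧ ((m l : ℕ) ≤ (j : ℕ) → T l j ω ≤ t))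
              ∧ (∀ j : Fin (n i),
                ((j : ℕ) = 0 → t < T i j ω ∧ T i j ω ≤ t + δ)
                ∧ (1 ≤ (j : ℕ) ∧ (j : ℕ) ≤ (m i : ℕ) → t < T i j ω)
                ∧ ((m i : ℕ) + 1 ≤ (j : ℕ) → T i j ω ≤ t))}).toReal :=
  stmt_3_general P n T hTmeas hexch φ Tsys hT i t δ ht
end

section
/- Under within-type exchangeability, for every t ≥ 0 and every count vector l = (l_1,…,l_L) with 0 ≤ l_k ≤ n_k: P( T > t and C_k(t) = l_k for all k ) = Φ(l_1,…,l_L) · P( C_k(t) = l_k for all k ). Consequently the system reliability satisfies P(T > t) = Σ_{l_1=0}^{n_1} ⋯ Σ_{l_L=0}^{n_L} Φ(l_1,…,l_L) P(C_1(t)=l_1, …, C_L(t)=l_L). -/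
open MeasureTheory Finset

lemma exists_perm_bool {m : ℕ} (x y : Fin m → Bool)
    (h : (Finset.univ.filter fun j => x j = true).card
       = (Finset.univ.filter fun j => y j = true).card) :
    ∃ σ : Equiv.Perm (Fin m), ∀ j, x (σ j) = y j := by
  classical
  have hc : Fintype.card {j // y j = true} = Fintype.card {j // x j = true} := by
    simp only [Fintype.card_subtype]; exact h.symm
  have hc' : Fintype.card {j // ¬ y j = true} = Fintype.card {j // ¬ x j = true} := by
    have h1 := Fintype.card_subtype_compl (fun j : Fin m => y j = true)
    have h2 := Fintype.card_subtype_compl (fun j : Fin m => x j = true)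
    rw [h1, h2, hc]
  obtain ⟨e⟩ := Fintype.card_eq.mp hc
  obtain ⟨e'⟩ := Fintype.card_eq.mp hc'
  refine ⟨Equiv.subtypeCongr e e', fun j => ?_⟩
  by_cases hy : y j = true
  · have hx : x ((Equiv.subtypeCongr e e') j) = true := by
      have h3 : (Equiv.subtypeCongr e e') j = (e ⟨j, hy⟩ : Fin m) := by
        simp [Equiv.subtypeCongr, hy]
      rw [h3]; exact (e ⟨j, hy⟩).2
    rw [hx, hy]
  · have hx : ¬ x ((Equiv.subtypeCongr e e') j) = true := by
      have h3 : (Equiv.subtypeCongr e e') j = (e' ⟨j, hy⟩ : Fin m) := by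
        simp [Equiv.subtypeCongr, hy]
      rw [h3]; exact (e' ⟨j, hy⟩).2
    simp only [Bool.not_eq_true] at hx hy
    rw [hx, hy]

lemma card_bool_vec {m k : ℕ} :
    Fintype.card {f : Fin m → Bool // (Finset.univ.filter fun j => f j = true).card = k}
      = m.choose k := by
  classical
  have e : {f : Fin m → Bool // (Finset.univ.filter fun j => f j = true).card = k}
      ≃ {s : Finset (Fin m) // s.card = k} :=
  { toFun := fun f => ⟨Finset.univ.filter fun j => f.1 j = true, by simpa using f.2⟩
    invFun := fun s => ⟨fun j => decide (j ∈ s.1), by simp [s.2]⟩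
    left_inv := fun f => Subtype.ext (funext fun j => by simp)
    right_inv := fun s => Subtype.ext (by ext j; simp) }
  rw [Fintype.card_congr e, Fintype.card_subtype]
  have h2 : (Finset.univ.filter fun s : Finset (Fin m) => s.card = k)
      = Finset.powersetCard k Finset.univ := by
    ext s; simp [Finset.mem_powersetCard_univ]
  rw [h2, Finset.card_powersetCard, Finset.card_univ, Fintype.card_fin]

lemma card_states {L : ℕ} (n : Fin L → ℕ) (c : Fin L → ℕ) :
    Fintype.card {x : (l : Fin L) → Fin (n l) → Bool //
        ∀ l, (Finset.univ.filter fun j => x l j = true).card = c l}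
      = ∏ l, (n l).choose (c l) := by
  classical
  rw [Fintype.card_congr (Equiv.subtypePiEquivPi
    (p := fun l (f : Fin (n l) → Bool) =>
      (Finset.univ.filter fun j => f j = true).card = c l)), Fintype.card_pi]
  exact Finset.prod_congr rfl fun l _ => card_bool_vec

lemma measurable_decide_set (t : ℝ) (b : Bool) :
    MeasurableSet {r : ℝ | decide (t < r) = b} := by
  cases b
  · convert (measurableSet_Ioi (a := t)).compl using 1
    ext r; simp [Set.mem_compl_iff]
  · convert measurableSet_Ioi (a := t) using 1
    ext r; simp

lemma measure_state_eq
    {Ω : Type*} [MeasurableSpace Ω] (P : Measure Ω)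
    {L : ℕ} {n : Fin L → ℕ}
    (T : (l : Fin L) → Fin (n l) → Ω → ℝ)
    (hTmeas : ∀ l j, Measurable (T l j))
    (hexch : ∀ σ : (l : Fin L) → Equiv.Perm (Fin (n l)),
      Measure.map (fun ω (l : Fin L) (j : Fin (n l)) => T l (σ l j) ω) P
        = Measure.map (fun ω (l : Fin L) (j : Fin (n l)) => T l j ω) P)
    (t : ℝ) (x y : (l : Fin L) → Fin (n l) → Bool)
    (hxy : ∀ l, (Finset.univ.filter fun j => x l j = true).card
              = (Finset.univ.filter fun j => y l j = true).card) :
    P {ω | ∀ l j, decide (t < T l j ω) = x l j}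
      = P {ω | ∀ l j, decide (t < T l j ω) = y l j} := by
  classical
  choose σ hσ using fun l => exists_perm_bool (x l) (y l) (hxy l)
  set S : Set ((l : Fin L) → Fin (n l) → ℝ) :=
    {f | ∀ l j, decide (t < f l j) = y l j} with hS
  have hSmeas : MeasurableSet S := by
    have h0 : S = ⋂ l, ⋂ j, (fun f : (l : Fin L) → Fin (n l) → ℝ => f l j) ⁻¹'
        {r : ℝ | decide (t < r) = y l j} := by
      ext f; simp [hS, Set.mem_iInter]
    rw [h0]
    exact MeasurableSet.iInter fun l => MeasurableSet.iInter fun j =>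
      ((measurable_pi_apply j).comp (measurable_pi_apply l)) (measurable_decide_set t (y l j))
  have hFσ : Measurable (fun ω (l : Fin L) (j : Fin (n l)) => T l (σ l j) ω) :=
    measurable_pi_lambda _ fun l => measurable_pi_lambda _ fun j => hTmeas l (σ l j)
  have hF : Measurable (fun ω (l : Fin L) (j : Fin (n l)) => T l j ω) :=
    measurable_pi_lambda _ fun l => measurable_pi_lambda _ fun j => hTmeas l j
  have h1 : {ω | ∀ l j, decide (t < T l j ω) = x l j}
      = (fun ω (l : Fin L) (j : Fin (n l)) => T l (σ l j) ω) ⁻¹' S := by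
    ext ω
    simp only [Set.mem_setOf_eq, Set.mem_preimage, hS]
    constructor
    · intro h l j
      rw [← hσ l j]; exact h l (σ l j)
    · intro h l j
      have h2 := h l ((σ l).symm j)
      simp only [Equiv.apply_symm_apply] at h2
      rw [h2, ← hσ l ((σ l).symm j), Equiv.apply_symm_apply]
  have h2 : {ω | ∀ l j, decide (t < T l j ω) = y l j}
      = (fun ω (l : Fin L) (j : Fin (n l)) => T l j ω) ⁻¹' S := rfl
  rw [h1, h2, ← Measure.map_apply hFσ hSmeas, ← Measure.map_apply hF hSmeas, hexch σ]

/-- Under within-type exchangeability,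
`P(T > t, C_k(t) = l_k ∀k) = Φ(l) · P(C_k(t) = l_k ∀k)`, and consequently the system
reliability is the survival-signature mixture
`P(T > t) = Σ_l Φ(l) P(C_1(t)=l_1, …, C_L(t)=l_L)`. -/
theorem stmt_4
    {Ω : Type*} [MeasurableSpace Ω] (P : Measure Ω) [IsProbabilityMeasure P]
    {L : ℕ} (hL : 1 ≤ L) (n : Fin L → ℕ) (hn : ∀ l, 1 ≤ n l)
    (T : (l : Fin L) → Fin (n l) → Ω → ℝ)
    (hTmeas : ∀ l j, Measurable (T l j))
    (hexch : ∀ σ : (l : Fin L) → Equiv.Perm (Fin (n l)),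
      Measure.map (fun ω (l : Fin L) (j : Fin (n l)) => T l (σ l j) ω) P
        = Measure.map (fun ω (l : Fin L) (j : Fin (n l)) => T l j ω) P)
    (φ : ((l : Fin L) → Fin (n l) → Bool) → Bool) (hφ : Monotone φ)
    (Tsys : Ω → ℝ) (hTsys : Measurable Tsys)
    (hT : ∀ t : ℝ, 0 ≤ t →
      {ω | t < Tsys ω} = {ω | φ (fun l j => decide (t < T l j ω)) = true})
    (t : ℝ) (ht : 0 ≤ t) :
    (∀ l : Fin L → ℕ, (∀ k, l k ≤ n k) →
      (P {ω | t < Tsys ω ∧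
          ∀ k, (Finset.univ.filter fun j : Fin (n k) => t < T k j ω).card = l k}).toReal
        = survSig n φ l *
          (P {ω | ∀ k,
              (Finset.univ.filter fun j : Fin (n k) => t < T k j ω).card = l k}).toReal)
    ∧ (P {ω | t < Tsys ω}).toReal
        = ∑ l : (k : Fin L) → Fin (n k + 1),
            survSig n φ (fun k => (l k : ℕ)) *
              (P {ω | ∀ k,
                  (Finset.univ.filter fun j : Fin (n k) => t < T k j ω).card
                    = (l k : ℕ)}).toReal := by
  classical
  set X : Ω → (l : Fin L) → Fin (n l) → Bool := fun ω l j => decide (t < T l j ω) with hXdef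
  have hcard : ∀ (ω : Ω) (k : Fin L),
      (Finset.univ.filter fun j : Fin (n k) => t < T k j ω).card
        = (Finset.univ.filter fun j : Fin (n k) => X ω k j = true).card := by
    intro ω k
    congr 1
    exact Finset.filter_congr fun j _ => by simp [hXdef]
  have hEmeas : ∀ x : (l : Fin L) → Fin (n l) → Bool, MeasurableSet {ω | X ω = x} := by
    intro x
    have h1 : {ω | X ω = x} = ⋂ l, ⋂ j, T l j ⁻¹' {r : ℝ | decide (t < r) = x l j} := by
      ext ω; simp [hXdef, funext_iff, Set.mem_iInter]
    rw [h1]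
    exact MeasurableSet.iInter fun l => MeasurableSet.iInter fun j =>
      hTmeas l j (measurable_decide_set t (x l j))
  have hsum : ∀ s : Finset ((l : Fin L) → Fin (n l) → Bool),
      P {ω | X ω ∈ s} = ∑ x ∈ s, P {ω | X ω = x} := by
    intro s
    have h1 : {ω | X ω ∈ s} = ⋃ x ∈ s, {ω | X ω = x} := by
      ext ω; simp
    rw [h1, measure_biUnion_finset ?_ fun x _ => hEmeas x]
    intro x _ y _ hxy
    simp only [Function.onFun]
    rw [Set.disjoint_left]
    rintro ω h1 h2
    simp only [Set.mem_setOf_eq] at h1 h2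
    exact hxy (h1.symm.trans h2)
  have hsumR : ∀ s : Finset ((l : Fin L) → Fin (n l) → Bool),
      (P {ω | X ω ∈ s}).toReal = ∑ x ∈ s, (P {ω | X ω = x}).toReal := by
    intro s
    rw [hsum s, ENNReal.toReal_sum fun x _ => measure_ne_top P _]
  have hconst : ∀ x y : (l : Fin L) → Fin (n l) → Bool,
      (∀ l, (Finset.univ.filter fun j => x l j = true).card
          = (Finset.univ.filter fun j => y l j = true).card) →
      (P {ω | X ω = x}).toReal = (P {ω | X ω = y}).toReal := by
    intro x y h
    have hx : {ω | X ω = x} = {ω | ∀ l j, decide (t < T l j ω) = x l j} := by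
      ext ω; simp [hXdef, funext_iff]
    have hy : {ω | X ω = y} = {ω | ∀ l j, decide (t < T l j ω) = y l j} := by
      ext ω; simp [hXdef, funext_iff]
    rw [hx, hy, measure_state_eq P T hTmeas hexch t x y h]
  have hTpt : ∀ ω, t < Tsys ω ↔ φ (X ω) = true := fun ω => Set.ext_iff.mp (hT t ht) ω
  have main : ∀ c : Fin L → ℕ, (∀ k, c k ≤ n k) →
      (P {ω | t < Tsys ω ∧
          ∀ k, (Finset.univ.filter fun j : Fin (n k) => t < T k j ω).card = c k}).toReal
        = survSig n φ c *
          (P {ω | ∀ k,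
              (Finset.univ.filter fun j : Fin (n k) => t < T k j ω).card = c k}).toReal := by
    intro c hc
    set S : Finset ((l : Fin L) → Fin (n l) → Bool) :=
      Finset.univ.filter fun x =>
        ∀ l, (Finset.univ.filter fun j => x l j = true).card = c l with hSdef
    set Sφ : Finset ((l : Fin L) → Fin (n l) → Bool) :=
      Finset.univ.filter fun x =>
        (∀ l, (Finset.univ.filter fun j => x l j = true).card = c l) ∧ φ x = true with hSφdef
    have hsubset : Sφ ⊆ S := by
      intro x hx
      rw [hSφdef, Finset.mem_filter] at hx
      rw [hSdef, Finset.mem_filter]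
      exact ⟨hx.1, hx.2.1⟩
    have hA : {ω | ∀ k,
        (Finset.univ.filter fun j : Fin (n k) => t < T k j ω).card = c k}
        = {ω | X ω ∈ S} := by
      ext ω
      simp only [Set.mem_setOf_eq, hSdef, Finset.mem_filter, Finset.mem_univ, true_and]
      constructor
      · intro h k; exact ((hcard ω k).symm).trans (h k)
      · intro h k; exact (hcard ω k).trans (h k)
    have hB : {ω | t < Tsys ω ∧
        ∀ k, (Finset.univ.filter fun j : Fin (n k) => t < T k j ω).card = c k}
        = {ω | X ω ∈ Sφ} := by
      ext ω
      simp only [Set.mem_setOf_eq, hSφdef, Finset.mem_filter, Finset.mem_univ, true_and]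
      rw [hTpt ω]
      constructor
      · rintro ⟨h1, h2⟩; exact ⟨fun k => ((hcard ω k).symm).trans (h2 k), h1⟩
      · rintro ⟨h2, h1⟩; exact ⟨h1, fun k => (hcard ω k).trans (h2 k)⟩
    have hScard : (S.card : ℝ) = ∏ k, ((n k).choose (c k) : ℝ) := by
      have h1 := card_states n c
      rw [Fintype.card_subtype] at h1
      rw [hSdef]
      rw [h1]
      push_cast
      try rfl
    have hsig : survSig n φ c = (Sφ.card : ℝ) / ∏ k, ((n k).choose (c k) : ℝ) := by
      rw [survSig, Finset.sum_boole, hSφdef]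
    rcases S.eq_empty_or_nonempty with hS0 | ⟨x₀, hx₀⟩
    · have hSφ0 : Sφ = ∅ := Finset.subset_empty.mp (hS0 ▸ hsubset)
      rw [hA, hB, hS0, hSφ0]
      simp
    · have hx₀c : ∀ l, (Finset.univ.filter fun j => x₀ l j = true).card = c l := by
        have := hx₀; rw [hSdef, Finset.mem_filter] at this; exact this.2
      have hval : ∀ x ∈ S, (P {ω | X ω = x}).toReal = (P {ω | X ω = x₀}).toReal := by
        intro x hx
        rw [hSdef, Finset.mem_filter] at hx
        exact hconst x x₀ fun l => (hx.2 l).trans ((hx₀c l).symm)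
      rw [hA, hB, hsumR S, hsumR Sφ,
        Finset.sum_congr rfl hval,
        Finset.sum_congr rfl (fun x hx => hval x (hsubset hx)),
        Finset.sum_const, Finset.sum_const, hsig]
      simp only [nsmul_eq_mul]
      have hprod : (0:ℝ) < ∏ k, ((n k).choose (c k) : ℝ) := by
        apply Finset.prod_pos; intro k _
        exact_mod_cast Nat.choose_pos (hc k)
      rw [hScard]
      field_simp
  refine ⟨main, ?_⟩
  have hcle : ∀ (x : (l : Fin L) → Fin (n l) → Bool) (k : Fin L),
      (Finset.univ.filter fun j => x k j = true).card < n k + 1 :=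
    fun x k => Nat.lt_succ_of_le ((Finset.card_filter_le _ _).trans (by simp))
  set g : ((l : Fin L) → Fin (n l) → Bool) → ((k : Fin L) → Fin (n k + 1)) :=
    fun x k => ⟨(Finset.univ.filter fun j => x k j = true).card, hcle x k⟩ with hgdef
  have hTset : {ω | t < Tsys ω} = {ω | X ω ∈ Finset.univ.filter fun x => φ x = true} := by
    ext ω
    simp only [Set.mem_setOf_eq, Finset.mem_filter, Finset.mem_univ, true_and]
    exact hTpt ω
  rw [hTset, hsumR,
    ← Finset.sum_fiberwise (Finset.univ.filter fun x => φ x = true) g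
      (fun x => (P {ω | X ω = x}).toReal)]
  refine Finset.sum_congr rfl fun c _ => ?_
  have hBc : {ω | t < Tsys ω ∧
      ∀ k, (Finset.univ.filter fun j : Fin (n k) => t < T k j ω).card = (c k : ℕ)}
      = {ω | X ω ∈ (Finset.univ.filter fun x => φ x = true).filter fun x => g x = c} := by
    ext ω
    simp only [Set.mem_setOf_eq, Finset.mem_filter, Finset.mem_univ, true_and]
    rw [hTpt ω]
    constructor
    · rintro ⟨h1, h2⟩
      refine ⟨h1, funext fun k => Fin.ext ?_⟩
      exact ((hcard ω k).symm).trans (h2 k)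
    · rintro ⟨h1, h2⟩
      exact ⟨h1, fun k => (hcard ω k).trans (congrArg Fin.val (congrFun h2 k))⟩
  calc (∑ x ∈ (Finset.univ.filter fun x => φ x = true).filter fun x => g x = c,
          (P {ω | X ω = x}).toReal)
      = (P {ω | X ω ∈ (Finset.univ.filter fun x => φ x = true).filter fun x => g x = c}).toReal :=
        (hsumR _).symm
    _ = (P {ω | t < Tsys ω ∧
          ∀ k, (Finset.univ.filter fun j : Fin (n k) => t < T k j ω).card = (c k : ℕ)}).toReal := by
        rw [hBc]
    _ = survSig n φ (fun k => (c k : ℕ)) *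
          (P {ω | ∀ k,
              (Finset.univ.filter fun j : Fin (n k) => t < T k j ω).card = (c k : ℕ)}).toReal :=
        main (fun k => (c k : ℕ)) fun k => Nat.lt_succ_iff.mp (c k).isLt
end

section
/- Under within-type exchangeability, for every t ≥ 0 the system reliability admits the representation P(T > t) = Σ_{l_1=0}^{n_1} ⋯ Σ_{l_L=0}^{n_L} Σ_{i_1=0}^{n_1−l_1} ⋯ Σ_{i_L=0}^{n_L−l_L} (−1)^{i_1+⋯+i_L} (∏_{k=1}^L C(n_k, l_k) C(n_k−l_k, i_k)) · Φ(l_1,…,l_L) · S( (l_1+i_1, …, l_L+i_L); t ). -/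
/-!
Let `μ` be the law of the state vector `X(t)` on the Boolean lattice of state vectors.
Exchangeability makes `μ` invariant under permutations of the components within each type, so
`P(X = x)` and `P(X ≥ x)` depend on `x` only through its vector of working counts. Grouping the
states with `φ x = 1` by count vector `l` turns `P(T > t) = Σ_{φ x = 1} P(X = x)` into
`Σ_l Φ(l) ∏ C(n_k, l_k) P(X = x_l)` for a representative `x_l`. Möbius inversion on the
Boolean lattice, whose Möbius function is `(-1)^(|y| - |x|)`, gives
`P(X = x_l) = Σ_{y ≥ x_l} (-1)^(|y| - |x_l|) P(X ≥ y)`; there are `∏ C(n_k - l_k, i_k)` states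
`y ≥ x_l` with count vector `l + i`, and for each of them `P(X ≥ y) = S(l + i; t)`.
-/

open MeasureTheory Finset

instance Bool.instLocallyFiniteOrder : LocallyFiniteOrder Bool := Fintype.toLocallyFiniteOrder

section BoolFun

variable {β : Type*} [Fintype β]

theorem card_filter_true_eq_add_of_le {u v : β → Bool} (huv : u ≤ v) :
    #{j | v j = true} = #{j | u j = true} + #{j | u j = false ∧ v j = true} := by
  classical
  rw [← card_union_of_disjoint]
  · congr 1; ext j; have := huv j; cases hu : u j <;> cases hv : v j <;> simp_all [Bool.le_iff_imp]
  · rw [disjoint_filter]; intro j _ hu; simp [hu]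

theorem card_filter_Ici_card_true_eq [DecidableEq β] (u : β → Bool) (i : ℕ) :
    #{w ∈ Ici u | #{j | w j = true} = #{j | u j = true} + i}
      = (Fintype.card β - #{j | u j = true}).choose i := by
  have hfalse : #{j | u j = false} = Fintype.card β - #{j | u j = true} := by
    rw [← card_univ, ← card_filter_add_card_filter_not (s := univ) (fun j => u j = true)]
    simp
  rw [← hfalse, ← card_powersetCard]
  refine card_nbij' (fun w => ({j | u j = false ∧ w j = true} : Finset β))
    (fun S j => u j || decide (j ∈ S)) ?_ ?_ ?_ ?_
  · intro w hw
    simp only [coe_filter, mem_Ici, Set.mem_ofPred_eq] at hw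
    simp only [mem_coe, mem_powersetCard]
    refine ⟨fun j => by simp +contextual, ?_⟩
    have := card_filter_true_eq_add_of_le hw.1
    omega
  · intro S hS
    simp only [mem_coe, mem_powersetCard] at hS
    simp only [coe_filter, mem_Ici, Set.mem_ofPred_eq]
    have hle : u ≤ fun j => u j || decide (j ∈ S) := fun j => by simp [Bool.le_iff_imp, imp_or]
    refine ⟨hle, ?_⟩
    rw [card_filter_true_eq_add_of_le hle, ← hS.2]
    congr 2
    ext j
    have := @hS.1 j
    cases hu : u j <;> simp_all
  · intro w hw
    simp only [coe_filter, mem_Ici, Set.mem_ofPred_eq] at hw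
    funext j
    have := hw.1 j
    cases hu : u j <;> cases hw : w j <;> simp_all [Bool.le_iff_imp]
  · intro S hS
    simp only [mem_coe, mem_powersetCard] at hS
    ext j
    have := @hS.1 j
    cases hu : u j <;> simp_all

theorem exists_perm_eq_comp_of_card_eq {u v : β → Bool}
    (h : #{j | u j = true} = #{j | v j = true}) : ∃ σ : Equiv.Perm β, u = v ∘ σ := by
  classical
  let e : {j // u j = true} ≃ {j // v j = true} :=
    Fintype.equivOfCardEq (by simpa only [Fintype.card_subtype] using h)
  refine ⟨e.extendSubtype, funext fun j => ?_⟩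
  by_cases hj : u j = true
  · simp [hj, e.extendSubtype_mem j hj]
  · simpa [hj] using e.extendSubtype_not_mem j hj

end BoolFun

namespace IncidenceAlgebra

variable {𝕜 : Type*} [CommRing 𝕜]

theorem mu_pi {ι : Type*} [Fintype ι] [DecidableEq ι] {α : ι → Type*}
    [∀ i, PartialOrder (α i)] [∀ i, LocallyFiniteOrder (α i)] [∀ i, DecidableEq (α i)]
    (a b : ∀ i, α i) : mu 𝕜 a b = ∏ i, mu 𝕜 (a i) (b i) := by
  classical
  let ν : IncidenceAlgebra 𝕜 (∀ i, α i) :=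
    ⟨fun a b => ∏ i, mu 𝕜 (a i) (b i), fun a b hab => by
      obtain ⟨i, hi⟩ : ∃ i, ¬ a i ≤ b i := by simpa [Pi.le_def] using hab
      exact prod_eq_zero (mem_univ i) (apply_eq_zero_of_not_le hi _)⟩
  have hν : ν * zeta 𝕜 = 1 := by
    ext a b -
    calc (ν * zeta 𝕜 : IncidenceAlgebra 𝕜 _) a b = ∑ x ∈ Icc a b, ∏ i, mu 𝕜 (a i) (x i) :=
          sum_congr rfl fun x hx => by simp [ν, (mem_Icc.1 hx).2]
      _ = ∏ i, ∑ c ∈ Icc (a i) (b i), mu 𝕜 (a i) c := by rw [prod_univ_sum]; rfl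
      _ = (1 : IncidenceAlgebra 𝕜 (∀ i, α i)) a b := by
          simp only [sum_Icc_mu_right, prod_boole, one_apply, mem_univ, true_implies, funext_iff]
  rw [← left_inv_eq_right_inv hν zeta_mul_mu]
  rfl

theorem mu_false_true : mu 𝕜 false true = -1 := by
  rw [mu_apply, if_neg Bool.false_ne_true, show Ico false true = {false} from rfl, sum_singleton,
    mu_self]

theorem mu_boolFun_of_le {β : Type*} [Fintype β] [DecidableEq β] {u v : β → Bool} (huv : u ≤ v) :
    mu 𝕜 u v = (-1) ^ (#{j | v j = true} - #{j | u j = true}) := by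
  have hmu : ∀ j, mu 𝕜 (u j) (v j) = if u j = false ∧ v j = true then -1 else 1 := fun j => by
    have := huv j
    cases hu : u j <;> cases hv : v j <;> simp_all [Bool.le_iff_imp, mu_false_true]
  rw [mu_pi, card_filter_true_eq_add_of_le huv, Nat.add_sub_cancel_left]
  simp only [hmu, prod_ite, prod_const_one, prod_const, mul_one]

end IncidenceAlgebra

theorem measureReal_singleton_eq_sum_mu {α : Type*} [PartialOrder α] [OrderTop α]
    [LocallyFiniteOrder α] [DecidableEq α] [MeasurableSpace α] [MeasurableSingletonClass α]
    (μ : Measure α) [IsFiniteMeasure μ] (x : α) :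
    μ.real {x} = ∑ y ∈ Ici x, IncidenceAlgebra.mu ℝ x y * μ.real (Set.Ici y) :=
  IncidenceAlgebra.moebius_inversion_top (fun y => μ.real {y}) (fun y => μ.real (Set.Ici y))
    (fun y => by rw [sum_measureReal_singleton, coe_Ici]) x

abbrev StateVector {L : ℕ} (n : Fin L → ℕ) := (l : Fin L) → Fin (n l) → Bool

section StateVector

variable {L : ℕ} {n : Fin L → ℕ}

def workingCount (x : StateVector n) (l : Fin L) : ℕ := #{j | x l j = true}

def leadingState (n : Fin L → ℕ) (c : Fin L → ℕ) : StateVector n :=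
  fun l j => decide ((j : ℕ) < c l)

theorem workingCount_le (x : StateVector n) (l : Fin L) : workingCount x l ≤ n l :=
  (card_filter_le _ _).trans_eq (card_fin _)

theorem workingCount_leadingState {c : Fin L → ℕ} (hc : ∀ l, c l ≤ n l) :
    workingCount (leadingState n c) = c := by
  funext l
  simp [workingCount, leadingState, Fin.card_filter_val_lt, hc l]

theorem workingCount_mono {x y : StateVector n} (hxy : x ≤ y) (l : Fin L) :
    workingCount x l ≤ workingCount y l :=
  (card_filter_true_eq_add_of_le (hxy l)).trans_ge (Nat.le_add_right _ _)

def permWithinTypes (σ : (l : Fin L) → Equiv.Perm (Fin (n l))) :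
    StateVector n ≃o StateVector n where
  toFun x l j := x l (σ l j)
  invFun x l j := x l ((σ l).symm j)
  left_inv x := by simp
  right_inv x := by simp
  map_rel_iff' := ⟨fun h l j => by simpa using h l ((σ l).symm j), fun h l j => h l (σ l j)⟩

theorem exists_permWithinTypes_leadingState (x : StateVector n) :
    ∃ σ, permWithinTypes σ (leadingState n (workingCount x)) = x := by
  have h : ∀ l, ∃ σ : Equiv.Perm (Fin (n l)), x l = leadingState n (workingCount x) l ∘ σ :=
    fun l => exists_perm_eq_comp_of_card_eq <|
      (congrFun (workingCount_leadingState (workingCount_le x)) l).symm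
  choose σ hσ using h
  exact ⟨σ, funext fun l => (hσ l).symm⟩

theorem eq_of_workingCount_eq {α : Type*} {h : StateVector n → α}
    (hh : ∀ σ x, h (permWithinTypes σ x) = h x) {x y : StateVector n}
    (hxy : workingCount x = workingCount y) : h x = h y := by
  obtain ⟨σ, hσ⟩ := exists_permWithinTypes_leadingState x
  obtain ⟨τ, hτ⟩ := exists_permWithinTypes_leadingState y
  rw [← hσ, ← hτ, hh, hh, hxy]

theorem mu_eq_neg_one_pow_sum_workingCount {𝕜 : Type*} [CommRing 𝕜] {x y : StateVector n}
    (hxy : x ≤ y) :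
    IncidenceAlgebra.mu 𝕜 x y = (-1) ^ ∑ l, (workingCount y l - workingCount x l) := by
  rw [IncidenceAlgebra.mu_pi, ← prod_pow_eq_pow_sum]
  exact prod_congr rfl fun l _ => IncidenceAlgebra.mu_boolFun_of_le (hxy l)

theorem card_filter_Ici_leadingState {c : Fin L → ℕ} (hc : ∀ l, c l ≤ n l) (i : Fin L → ℕ) :
    #{y ∈ Ici (leadingState n c) | ∀ l, workingCount y l = c l + i l}
      = ∏ l, (n l - c l).choose (i l) := by
  have hcount : ∀ l, #{j | leadingState n c l j = true} = c l :=
    congrFun (workingCount_leadingState hc)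
  have hpi : {y ∈ Ici (leadingState n c) | ∀ l, workingCount y l = c l + i l}
      = Fintype.piFinset fun l =>
          {w ∈ Ici (leadingState n c l) |
            #{j | w j = true} = #{j | leadingState n c l j = true} + i l} := by
    ext y
    rw [mem_filter, mem_Ici]
    simp [Fintype.mem_piFinset, Pi.le_def, workingCount, hcount, forall_and]
  rw [hpi, Fintype.card_piFinset]
  refine prod_congr rfl fun l _ => ?_
  rw [card_filter_Ici_card_true_eq, Fintype.card_fin, hcount]

theorem survSig_mul_prod_choose (φ : StateVector n → Bool) {c : Fin L → ℕ}
    (hc : ∀ l, c l ≤ n l) :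
    survSig n φ c * ∏ l, ((n l).choose (c l) : ℝ)
      = #{x | (∀ l, workingCount x l = c l) ∧ φ x = true} := by
  rw [survSig, div_mul_cancel₀ _ (prod_ne_zero_iff.2 fun l _ => by
    exact_mod_cast (Nat.choose_pos (hc l)).ne'), sum_boole]
  rfl

theorem sum_ite_eq_sum_survSig (φ : StateVector n → Bool) {h : StateVector n → ℝ}
    (hh : ∀ x y, workingCount x = workingCount y → h x = h y) :
    ∑ x, (if φ x = true then h x else 0)
      = ∑ c : (l : Fin L) → Fin (n l + 1),
          survSig n φ (fun l => c l) * (∏ l, ((n l).choose (c l) : ℝ))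
            * h (leadingState n fun l => c l) := by
  let count : StateVector n → (l : Fin L) → Fin (n l + 1) :=
    fun x l => ⟨workingCount x l, Nat.lt_succ_of_le (workingCount_le x l)⟩
  rw [← sum_fiberwise_of_maps_to (g := count) (t := univ) fun _ _ => mem_univ _]
  refine sum_congr rfl fun c _ => ?_
  have hc : ∀ l, (c l : ℕ) ≤ n l := fun l => Nat.lt_succ_iff.1 (c l).2
  have hcount : ∀ x, count x = c ↔ ∀ l, workingCount x l = c l := fun x => by
    simp [count, funext_iff, Fin.ext_iff]
  rw [survSig_mul_prod_choose φ hc, ← nsmul_eq_mul, ← sum_const, sum_filter, sum_filter]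
  refine sum_congr rfl fun x _ => ?_
  by_cases hx : ∀ l, workingCount x l = c l
  · rw [if_pos ((hcount x).2 hx), hh x _ ((funext hx).trans (workingCount_leadingState hc).symm)]
    by_cases hφ : φ x = true <;> simp [hx, hφ]
  · simp [hcount, hx]

theorem sum_Ici_leadingState_mu_mul {G : StateVector n → ℝ}
    (hG : ∀ x y, workingCount x = workingCount y → G x = G y) {c : Fin L → ℕ}
    (hc : ∀ l, c l ≤ n l) :
    ∑ y ∈ Ici (leadingState n c), IncidenceAlgebra.mu ℝ (leadingState n c) y * G y
      = ∑ i : (l : Fin L) → Fin (n l - c l + 1),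
          (-1) ^ (∑ l, (i l : ℕ)) * (∏ l, ((n l - c l).choose (i l) : ℝ))
            * G (leadingState n fun l => c l + i l) := by
  let excess : StateVector n → (l : Fin L) → Fin (n l - c l + 1) :=
    fun y l => ⟨workingCount y l - c l, by have := workingCount_le y l; omega⟩
  rw [← sum_fiberwise_of_maps_to (g := excess) (t := univ) fun _ _ => mem_univ _]
  refine sum_congr rfl fun i _ => ?_
  have hfiber : {y ∈ Ici (leadingState n c) | excess y = i}
      = {y ∈ Ici (leadingState n c) | ∀ l, workingCount y l = c l + i l} := by
    refine filter_congr fun y hy => ?_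
    have hcy : ∀ l, c l ≤ workingCount y l := fun l =>
      (congrFun (workingCount_leadingState hc) l).symm.trans_le
        (workingCount_mono (mem_Ici.1 hy) l)
    simp only [excess, funext_iff, Fin.ext_iff]
    exact forall_congr' fun l => by have := hcy l; omega
  have hterm : ∀ y ∈ {y ∈ Ici (leadingState n c) | ∀ l, workingCount y l = c l + i l},
      IncidenceAlgebra.mu ℝ (leadingState n c) y * G y
        = (-1) ^ (∑ l, (i l : ℕ)) * G (leadingState n fun l => c l + i l) := by
    intro y hy
    obtain ⟨hy, hcount⟩ := mem_filter.1 hy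
    have hci : ∀ l, c l + i l ≤ n l := fun l => by have := (i l).2; have := hc l; omega
    rw [mu_eq_neg_one_pow_sum_workingCount (mem_Ici.1 hy), workingCount_leadingState hc,
      hG y _ ((funext hcount).trans (workingCount_leadingState hci).symm)]
    simp [hcount]
  rw [hfiber, sum_congr rfl hterm, sum_const, card_filter_Ici_leadingState hc, nsmul_eq_mul]
  push_cast
  ring

theorem measureReal_setOf_eq_sum_survSig (μ : Measure (StateVector n)) [IsFiniteMeasure μ]
    (hμ : ∀ σ, MeasurePreserving (permWithinTypes σ) μ μ) (φ : StateVector n → Bool) :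
    μ.real {x | φ x = true}
      = ∑ l : (k : Fin L) → Fin (n k + 1), ∑ i : (k : Fin L) → Fin (n k - (l k : ℕ) + 1),
          (-1 : ℝ) ^ (∑ k, (i k : ℕ))
            * (∏ k, (Nat.choose (n k) (l k) : ℝ) * (Nat.choose (n k - (l k : ℕ)) (i k) : ℝ))
            * survSig n φ (fun k => (l k : ℕ))
            * μ.real (Set.Ici (leadingState n fun k => l k + i k)) := by
  have hinv : ∀ σ s, μ.real (permWithinTypes σ ⁻¹' s) = μ.real s := fun σ _ =>
    (hμ σ).measureReal_preimage MeasurableSet.of_discrete.nullMeasurableSet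
  have hsingleton : ∀ x y, workingCount x = workingCount y → μ.real {x} = μ.real {y} :=
    fun x y => eq_of_workingCount_eq (h := fun x => μ.real {x}) fun σ x => by
      rw [← hinv σ]; congr 1; ext; simp
  have hIci : ∀ x y, workingCount x = workingCount y → μ.real (Set.Ici x) = μ.real (Set.Ici y) :=
    fun x y => eq_of_workingCount_eq (h := fun x => μ.real (Set.Ici x)) fun σ x => by
      rw [← hinv σ]; congr 1; ext; simp
  calc μ.real {x | φ x = true} = ∑ x, if φ x = true then μ.real {x} else 0 := by
        rw [← sum_filter, sum_measureReal_singleton, coe_filter]; simp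
    _ = _ := sum_ite_eq_sum_survSig φ hsingleton
    _ = _ := sum_congr rfl fun l _ => by
        have hl : ∀ k, (l k : ℕ) ≤ n k := fun k => Nat.lt_succ_iff.1 (l k).2
        rw [measureReal_singleton_eq_sum_mu]
        -- `Finset.Ici` comes from `LocallyFiniteOrder.toLocallyFiniteOrderTop` on the left and
        -- from `Pi.instLocallyFiniteOrderTop` in the lemma; the two agree only up to defeq
        erw [sum_Ici_leadingState_mu_mul hIci hl]
        rw [mul_sum]
        refine sum_congr rfl fun i _ => ?_
        rw [prod_mul_distrib]
        ring

end StateVector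

section Lifetimes

variable {Ω : Type*} [MeasurableSpace Ω] {L : ℕ} {n : Fin L → ℕ}

noncomputable def stateAt (t : ℝ) (y : (l : Fin L) → Fin (n l) → ℝ) : StateVector n :=
  fun l j => decide (t < y l j)

theorem measurable_stateAt (t : ℝ) : Measurable (stateAt (n := n) t) :=
  measurable_pi_lambda _ fun l => measurable_pi_lambda _ fun j =>
    measurable_to_countable' fun b => by
      have hm : MeasurableSet {y : (l : Fin L) → Fin (n l) → ℝ | t < y l j} :=
        measurableSet_lt measurable_const ((measurable_pi_apply j).comp (measurable_pi_apply l))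
      cases b
      · convert hm.compl using 1; ext y; simp [stateAt]
      · convert hm using 1; ext y; simp [stateAt]

theorem measurePreserving_permWithinTypes {P : Measure Ω} {Y : Ω → (l : Fin L) → Fin (n l) → ℝ}
    (hY : Measurable Y)
    (hexch : ∀ σ : (l : Fin L) → Equiv.Perm (Fin (n l)),
      P.map (fun ω l j => Y ω l (σ l j)) = P.map Y)
    (t : ℝ) (σ : (l : Fin L) → Equiv.Perm (Fin (n l))) :
    MeasurePreserving (permWithinTypes σ) (P.map (stateAt t ∘ Y)) (P.map (stateAt t ∘ Y)) := by
  refine ⟨.of_discrete, ?_⟩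
  have hYσ : Measurable fun ω l j => Y ω l (σ l j) :=
    measurable_pi_lambda _ fun l => measurable_pi_lambda _ fun j =>
      (measurable_pi_apply _).comp ((measurable_pi_apply l).comp hY)
  rw [Measure.map_map .of_discrete ((measurable_stateAt t).comp hY),
    show permWithinTypes σ ∘ stateAt t ∘ Y = stateAt t ∘ fun ω l j => Y ω l (σ l j) from rfl,
    ← Measure.map_map (measurable_stateAt t) hYσ, hexch, Measure.map_map (measurable_stateAt t) hY]

end Lifetimes

theorem stmt_5_general
    {Ω : Type*} [MeasurableSpace Ω] (P : Measure Ω) [IsProbabilityMeasure P]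
    {L : ℕ} (n : Fin L → ℕ)
    (T : (l : Fin L) → Fin (n l) → Ω → ℝ)
    (hTmeas : ∀ l j, Measurable (T l j))
    (hexch : ∀ σ : (l : Fin L) → Equiv.Perm (Fin (n l)),
      Measure.map (fun ω (l : Fin L) (j : Fin (n l)) => T l (σ l j) ω) P
        = Measure.map (fun ω (l : Fin L) (j : Fin (n l)) => T l j ω) P)
    (φ : ((l : Fin L) → Fin (n l) → Bool) → Bool)
    (Tsys : Ω → ℝ)
    (hT : ∀ t : ℝ, 0 ≤ t →
      {ω | t < Tsys ω} = {ω | φ (fun l j => decide (t < T l j ω)) = true})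
    (t : ℝ) (ht : 0 ≤ t) :
    (P {ω | t < Tsys ω}).toReal
    = ∑ l : (k : Fin L) → Fin (n k + 1),
        ∑ i : (k : Fin L) → Fin (n k - (l k : ℕ) + 1),
          (-1 : ℝ) ^ (∑ k, (i k : ℕ))
            * (∏ k, (Nat.choose (n k) (l k) : ℝ) * (Nat.choose (n k - (l k : ℕ)) (i k) : ℝ))
            * survSig n φ (fun k => (l k : ℕ))
            * (P {ω | ∀ k, ∀ r : Fin (n k),
                (r : ℕ) < (l k : ℕ) + (i k : ℕ) → t < T k r ω}).toReal := by
  set Y : Ω → (l : Fin L) → Fin (n l) → ℝ := fun ω l j => T l j ω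
  have hY : Measurable Y := measurable_pi_lambda _ fun l => measurable_pi_lambda _ (hTmeas l)
  have hX : Measurable (stateAt t ∘ Y) := (measurable_stateAt t).comp hY
  have : IsProbabilityMeasure (P.map (stateAt t ∘ Y)) :=
    Measure.isProbabilityMeasure_map hX.aemeasurable
  have hevent : ∀ c : Fin L → ℕ, {ω | ∀ k, ∀ r : Fin (n k), (r : ℕ) < c k → t < T k r ω}
      = stateAt t ∘ Y ⁻¹' Set.Ici (leadingState n c) := fun c => by
    ext ω
    simp [Y, stateAt, leadingState, Pi.le_def, Bool.le_iff_imp]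
  have key := measureReal_setOf_eq_sum_survSig (P.map (stateAt t ∘ Y))
    (measurePreserving_permWithinTypes hY hexch t) φ
  simp only [map_measureReal_apply hX MeasurableSet.of_discrete, ← hevent] at key
  rw [hT t ht]
  exact key

/-- Under within-type exchangeability, the system reliability admits
the inclusion–exclusion representation in terms of the survival signature and the joint
survival probabilities `S((l₁+i₁,…,l_L+i_L); t)`. -/
theorem stmt_5
    {Ω : Type*} [MeasurableSpace Ω] (P : Measure Ω) [IsProbabilityMeasure P]
    {L : ℕ} (hL : 1 ≤ L) (n : Fin L → ℕ) (hn : ∀ l, 1 ≤ n l)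
    (T : (l : Fin L) → Fin (n l) → Ω → ℝ)
    (hTmeas : ∀ l j, Measurable (T l j))
    (hexch : ∀ σ : (l : Fin L) → Equiv.Perm (Fin (n l)),
      Measure.map (fun ω (l : Fin L) (j : Fin (n l)) => T l (σ l j) ω) P
        = Measure.map (fun ω (l : Fin L) (j : Fin (n l)) => T l j ω) P)
    (φ : ((l : Fin L) → Fin (n l) → Bool) → Bool) (hφ : Monotone φ)
    (Tsys : Ω → ℝ) (hTsys : Measurable Tsys)
    (hT : ∀ t : ℝ, 0 ≤ t →
      {ω | t < Tsys ω} = {ω | φ (fun l j => decide (t < T l j ω)) = true})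
    (t : ℝ) (ht : 0 ≤ t) :
    (P {ω | t < Tsys ω}).toReal
    = ∑ l : (k : Fin L) → Fin (n k + 1),
        ∑ i : (k : Fin L) → Fin (n k - (l k : ℕ) + 1),
          (-1 : ℝ) ^ (∑ k, (i k : ℕ))
            * (∏ k, (Nat.choose (n k) (l k) : ℝ) * (Nat.choose (n k - (l k : ℕ)) (i k) : ℝ))
            * survSig n φ (fun k => (l k : ℕ))
            * (P {ω | ∀ k, ∀ r : Fin (n k),
                (r : ℕ) < (l k : ℕ) + (i k : ℕ) → t < T k r ω}).toReal :=
  stmt_5_general P n T hTmeas hexch φ Tsys hT t ht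
end

section
/- Under within-type exchangeability, for every t ≥ 0 and every count vector l = (l_1,…,l_L) with 0 ≤ l_k ≤ n_k: P( #{j : T^{(k)}_j > t} = l_k for all k ) = (∏_{k=1}^L C(n_k, l_k)) · Σ_{i_1=0}^{n_1−l_1} ⋯ Σ_{i_L=0}^{n_L−l_L} (−1)^{i_1+⋯+i_L} (∏_{k=1}^L C(n_k−l_k, i_k)) · S( (l_1+i_1, …, l_L+i_L); t ). -/
open MeasureTheory Finset

namespace S11

variable {L : ℕ} {n : Fin L → ℕ}

/-- canonical finset of first `m` elements of `Fin N` -/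
def seg (N m : ℕ) : Finset (Fin N) := univ.filter fun r => (r : ℕ) < m

lemma mem_seg {N m : ℕ} {r : Fin N} : r ∈ seg N m ↔ (r : ℕ) < m := by
  simp [seg]

lemma card_seg {N m : ℕ} (h : m ≤ N) : (seg N m).card = m := by
  have himg : (seg N m).image Fin.val = Finset.range m := by
    ext x
    simp only [Finset.mem_image, Finset.mem_range, mem_seg]
    constructor
    · rintro ⟨r, hr, rfl⟩; exact hr
    · intro hx; exact ⟨⟨x, lt_of_lt_of_le hx h⟩, hx, rfl⟩
  have h2 := Finset.card_image_of_injective (seg N m) Fin.val_injective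
  rw [himg, Finset.card_range] at h2
  exact h2.symm

lemma exists_perm_image {N : ℕ} {A B : Finset (Fin N)} (h : A.card = B.card) :
    ∃ σ : Equiv.Perm (Fin N), A.image σ = B := by
  refine ⟨(Finset.equivOfCardEq h).extendSubtype, ?_⟩
  apply Finset.eq_of_subset_of_card_le
  · intro x hx
    simp only [Finset.mem_image] at hx
    obtain ⟨a, ha, rfl⟩ := hx
    rw [Equiv.extendSubtype_apply_of_mem _ a ha]
    exact ((Finset.equivOfCardEq h) ⟨a, ha⟩).2
  · rw [Finset.card_image_of_injective _ (Equiv.injective _), h]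

lemma filt_perm {N : ℕ} (σ : Equiv.Perm (Fin N)) (p : Fin N → Prop) [DecidablePred p]
    (A : Finset (Fin N)) :
    univ.filter (fun j => p (σ j)) = A ↔ univ.filter p = A.image σ := by
  have h : univ.filter p = (univ.filter fun j => p (σ j)).image σ := by
    conv_rhs => rw [← Finset.filter_image]
    rw [Finset.image_univ_equiv]
  constructor
  · rintro rfl; rw [h]
  · intro hA
    apply Finset.image_injective σ.injective
    rw [← h, hA]

/-- reindexing sums over componentwise supersets of `A` -/
lemma sum_supersets (A : (k : Fin L) → Finset (Fin (n k)))
    (F : ((k : Fin L) → Finset (Fin (n k))) → ℝ) :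
    ∑ B ∈ univ.filter (fun B : (k : Fin L) → Finset (Fin (n k)) => ∀ k, A k ⊆ B k), F B
      = ∑ D ∈ Fintype.piFinset (fun k => ((A k)ᶜ).powerset), F (fun k => A k ∪ D k) := by
  refine Finset.sum_nbij' (fun B => fun k => B k \ A k) (fun D => fun k => A k ∪ D k)
    ?_ ?_ ?_ ?_ ?_
  · intro B hB
    simp only [Finset.mem_filter, Finset.mem_univ, true_and] at hB
    simp only [Fintype.mem_piFinset, Finset.mem_powerset]
    intro k x hx
    simp only [Finset.mem_sdiff] at hx
    simp [hx.2]
  · intro D _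
    simp only [Finset.mem_filter, Finset.mem_univ, true_and]
    exact fun k => Finset.subset_union_left
  · intro B hB
    simp only [Finset.mem_filter, Finset.mem_univ, true_and] at hB
    funext k
    exact Finset.union_sdiff_of_subset (hB k)
  · intro D hD
    simp only [Fintype.mem_piFinset, Finset.mem_powerset] at hD
    funext k
    refine Finset.union_sdiff_cancel_left (Finset.disjoint_left.mpr ?_)
    intro x hx hxD
    exact (Finset.mem_compl.mp (hD k hxD)) hx
  · intro B hB
    simp only [Finset.mem_filter, Finset.mem_univ, true_and] at hB
    congr 1
    funext k
    exact (Finset.union_sdiff_of_subset (hB k)).symm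

lemma cw (A C : (k : Fin L) → Finset (Fin (n k))) (hAC : ∀ k, A k ⊆ C k) :
    ∑ B ∈ univ.filter (fun B : (k : Fin L) → Finset (Fin (n k)) => ∀ k, A k ⊆ B k),
        (if ∀ k, B k ⊆ C k then (-1 : ℝ) ^ (∑ k, (B k \ A k).card) else 0)
      = if C = A then 1 else 0 := by
  rw [sum_supersets A]
  have hsummand : ∀ D ∈ Fintype.piFinset (fun k => ((A k)ᶜ).powerset),
      (if ∀ k, A k ∪ D k ⊆ C k then (-1 : ℝ) ^ (∑ k, ((A k ∪ D k) \ A k).card) else 0)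
        = ∏ k, (if D k ⊆ C k then (-1 : ℝ) ^ (D k).card else 0) := by
    intro D hD
    simp only [Fintype.mem_piFinset, Finset.mem_powerset] at hD
    have hsd : ∀ k, (A k ∪ D k) \ A k = D k := by
      intro k
      refine Finset.union_sdiff_cancel_left (Finset.disjoint_left.mpr ?_)
      intro x hx hxD
      exact (Finset.mem_compl.mp (hD k hxD)) hx
    have hcond : (∀ k, A k ∪ D k ⊆ C k) ↔ ∀ k, D k ⊆ C k := by
      constructor
      · intro h k; exact (Finset.union_subset_iff.mp (h k)).2
      · intro h k; exact Finset.union_subset (hAC k) (h k)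
    by_cases hall : ∀ k, D k ⊆ C k
    · rw [if_pos (hcond.mpr hall)]
      simp only [hsd]
      rw [← Finset.prod_pow_eq_pow_sum]
      exact Finset.prod_congr rfl fun k _ => by rw [if_pos (hall k)]
    · rw [if_neg (fun h => hall (hcond.mp h))]
      obtain ⟨k0, hk0⟩ := not_forall.mp hall
      exact (Finset.prod_eq_zero (Finset.mem_univ k0) (by rw [if_neg hk0])).symm
  rw [Finset.sum_congr rfl hsummand,
    ← Finset.prod_univ_sum (fun k => ((A k)ᶜ).powerset)
      (fun k d => if d ⊆ C k then (-1 : ℝ) ^ d.card else 0)]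
  have hfac : ∀ k : Fin L,
      (∑ d ∈ ((A k)ᶜ).powerset, if d ⊆ C k then (-1 : ℝ) ^ d.card else 0)
        = if C k \ A k = ∅ then 1 else 0 := by
    intro k
    rw [← Finset.sum_filter]
    have : ((A k)ᶜ).powerset.filter (fun d => d ⊆ C k) = (C k \ A k).powerset := by
      ext d
      simp only [Finset.mem_filter, Finset.mem_powerset, Finset.subset_iff,
        Finset.mem_compl, Finset.mem_sdiff]
      constructor
      · rintro ⟨h1, h2⟩ x hx
        exact ⟨h2 hx, h1 hx⟩
      · intro h
        exact ⟨fun x hx => (h hx).2, fun x hx => (h hx).1⟩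
    rw [this]
    exact_mod_cast Finset.sum_powerset_neg_one_pow_card (x := C k \ A k)
  rw [Finset.prod_congr rfl fun k _ => hfac k, Finset.prod_boole]
  congr 1
  simp only [eq_iff_iff]
  constructor
  · intro h
    funext k
    exact le_antisymm (Finset.sdiff_eq_empty_iff_subset.mp (h k (Finset.mem_univ k))) (hAC k)
  · rintro rfl k _
    exact Finset.sdiff_eq_empty_iff_subset.mpr (hAC k)

lemma moebius (e g : ((k : Fin L) → Finset (Fin (n k))) → ℝ)
    (h : ∀ B, g B = ∑ C ∈ univ.filter
        (fun C : (k : Fin L) → Finset (Fin (n k)) => ∀ k, B k ⊆ C k), e C)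
    (A : (k : Fin L) → Finset (Fin (n k))) :
    e A = ∑ B ∈ univ.filter (fun B : (k : Fin L) → Finset (Fin (n k)) => ∀ k, A k ⊆ B k),
        (-1 : ℝ) ^ (∑ k, (B k \ A k).card) * g B := by
  have step1 : ∀ B ∈ univ.filter
      (fun B : (k : Fin L) → Finset (Fin (n k)) => ∀ k, A k ⊆ B k),
      (-1 : ℝ) ^ (∑ k, (B k \ A k).card) * g B
        = ∑ C ∈ univ.filter (fun C : (k : Fin L) → Finset (Fin (n k)) => ∀ k, A k ⊆ C k),
            (if ∀ k, B k ⊆ C k then (-1 : ℝ) ^ (∑ k, (B k \ A k).card) * e C else 0) := by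
    intro B hB
    simp only [Finset.mem_filter, Finset.mem_univ, true_and] at hB
    rw [h B, Finset.mul_sum]
    rw [Finset.sum_filter, Finset.sum_filter]
    refine Finset.sum_congr rfl fun C _ => ?_
    by_cases hBC : ∀ k, B k ⊆ C k
    · rw [if_pos hBC, if_pos (fun k => (hB k).trans (hBC k))]
    · rw [if_neg hBC]
      split <;> rfl
  rw [Finset.sum_congr rfl step1, Finset.sum_comm]
  have inner : ∀ C ∈ univ.filter
      (fun C : (k : Fin L) → Finset (Fin (n k)) => ∀ k, A k ⊆ C k),
      (∑ B ∈ univ.filter (fun B : (k : Fin L) → Finset (Fin (n k)) => ∀ k, A k ⊆ B k),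
          if ∀ k, B k ⊆ C k then (-1 : ℝ) ^ (∑ k, (B k \ A k).card) * e C else 0)
        = if C = A then e A else 0 := by
    intro C hC
    simp only [Finset.mem_filter, Finset.mem_univ, true_and] at hC
    have : ∀ B : (k : Fin L) → Finset (Fin (n k)), (if ∀ k, B k ⊆ C k then (-1 : ℝ) ^ (∑ k, (B k \ A k).card) * e C else 0)
        = (if ∀ k, B k ⊆ C k then (-1 : ℝ) ^ (∑ k, (B k \ A k).card) else 0) * e C := by
      intro B; split <;> ring
    simp only [this]
    rw [← Finset.sum_mul, cw A C hC]
    split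
    · next hCA => subst hCA; ring
    · ring
  rw [Finset.sum_congr rfl inner, Finset.sum_ite_eq']
  simp [Finset.mem_filter]


lemma regroup (g : ((k : Fin L) → Finset (Fin (n k))) → ℝ)
    (hg : ∀ A B : (k : Fin L) → Finset (Fin (n k)),
      (∀ k, (A k).card = (B k).card) → g A = g B)
    (l : Fin L → ℕ) (hl : ∀ k, l k ≤ n k) :
    ∑ B ∈ univ.filter
        (fun B : (k : Fin L) → Finset (Fin (n k)) => ∀ k, seg (n k) (l k) ⊆ B k),
        (-1 : ℝ) ^ (∑ k, (B k \ seg (n k) (l k)).card) * g B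
      = ∑ i : (k : Fin L) → Fin (n k - l k + 1),
          (-1 : ℝ) ^ (∑ k, (i k : ℕ)) * (∏ k, (Nat.choose (n k - l k) (i k) : ℝ))
            * g (fun k => seg (n k) (l k + (i k : ℕ))) := by
  set A : (k : Fin L) → Finset (Fin (n k)) := fun k => seg (n k) (l k) with hA
  have hAcard : ∀ k, (A k).card = l k := fun k => card_seg (hl k)
  have hcpl : ∀ k, ((A k)ᶜ).card = n k - l k := by
    intro k
    rw [Finset.card_compl, hAcard, Fintype.card_fin]
  have hdisj : ∀ (k : Fin L) (D : Finset (Fin (n k))), D ⊆ (A k)ᶜ → Disjoint (A k) D := by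
    intro k D hD
    exact Finset.disjoint_left.mpr fun x hx hxD => (Finset.mem_compl.mp (hD hxD)) hx
  rw [sum_supersets A (fun B => (-1 : ℝ) ^ (∑ k, (B k \ A k).card) * g B)]
  have hF : ∀ D ∈ Fintype.piFinset (fun k => ((A k)ᶜ).powerset),
      (-1 : ℝ) ^ (∑ k, ((fun k => A k ∪ D k) k \ A k).card) * g (fun k => A k ∪ D k)
        = (-1 : ℝ) ^ (∑ k, (D k).card) * g (fun k => seg (n k) (l k + (D k).card)) := by
    intro D hD
    simp only [Fintype.mem_piFinset, Finset.mem_powerset] at hD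
    have hsd : ∀ k, (A k ∪ D k) \ A k = D k := fun k =>
      Finset.union_sdiff_cancel_left (hdisj k (D k) (hD k))
    have hDle : ∀ k, (D k).card ≤ n k - l k := by
      intro k
      rw [← hcpl k]
      exact Finset.card_le_card (hD k)
    have hcards : ∀ k, ((A k ∪ D k)).card = (seg (n k) (l k + (D k).card)).card := by
      intro k
      have h1 := hDle k
      have h2 := hl k
      rw [Finset.card_union_of_disjoint (hdisj k (D k) (hD k)), hAcard,
        card_seg (by omega)]
    simp only [hsd]
    rw [hg _ _ hcards]
  rw [Finset.sum_congr rfl hF]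
  have hbound : ∀ (D : (k : Fin L) → Finset (Fin (n k))) (k : Fin L),
      min ((D k).card) (n k - l k) < n k - l k + 1 :=
    fun D k => Nat.lt_succ_of_le (min_le_right _ _)
  rw [← Finset.sum_fiberwise (Fintype.piFinset fun k => ((A k)ᶜ).powerset)
    (fun D => (fun k => (⟨min ((D k).card) (n k - l k), hbound D k⟩ : Fin (n k - l k + 1))))
    (fun D => (-1 : ℝ) ^ (∑ k, (D k).card) * g (fun k => seg (n k) (l k + (D k).card)))]
  refine Finset.sum_congr rfl fun i _ => ?_
  have hfib : (Fintype.piFinset fun k => ((A k)ᶜ).powerset).filter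
      (fun D => (fun k => (⟨min ((D k).card) (n k - l k), hbound D k⟩ : Fin (n k - l k + 1))) = i)
      = Fintype.piFinset (fun k => Finset.powersetCard (i k) ((A k)ᶜ)) := by
    ext D
    simp only [Finset.mem_filter, Fintype.mem_piFinset, Finset.mem_powerset,
      Finset.mem_powersetCard, funext_iff, Fin.ext_iff]
    constructor
    · rintro ⟨h1, h2⟩ k
      have hle : (D k).card ≤ n k - l k := by
        rw [← hcpl k]; exact Finset.card_le_card (h1 k)
      have := h2 k
      refine ⟨h1 k, ?_⟩
      omega
    · intro h
      have hik : ∀ k, (i k : ℕ) ≤ n k - l k := fun k => Nat.lt_succ_iff.mp (i k).isLt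
      refine ⟨fun k => (h k).1, fun k => ?_⟩
      have := (h k).2
      have := hik k
      omega
  rw [hfib]
  have hconst : ∀ D ∈ Fintype.piFinset (fun k => Finset.powersetCard (i k) ((A k)ᶜ)),
      (-1 : ℝ) ^ (∑ k, (D k).card) * g (fun k => seg (n k) (l k + (D k).card))
        = (-1 : ℝ) ^ (∑ k, (i k : ℕ)) * g (fun k => seg (n k) (l k + (i k : ℕ))) := by
    intro D hD
    simp only [Fintype.mem_piFinset, Finset.mem_powersetCard] at hD
    have hc : ∀ k, (D k).card = (i k : ℕ) := fun k => (hD k).2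
    have e1 : (∑ k, (D k).card) = ∑ k, (i k : ℕ) := Finset.sum_congr rfl fun k _ => hc k
    have e2 : (fun k => seg (n k) (l k + (D k).card))
        = fun k => seg (n k) (l k + (i k : ℕ)) := funext fun k => by rw [hc k]
    rw [e1, e2]
  rw [Finset.sum_congr rfl hconst, Finset.sum_const, Fintype.card_piFinset]
  simp only [Finset.card_powersetCard, hcpl]
  rw [nsmul_eq_mul, Nat.cast_prod]
  ring


section Measure

open MeasureTheory

set_option linter.unusedSectionVars false

variable {Ω : Type*} [MeasurableSpace Ω] {L : ℕ} {n : Fin L → ℕ}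

/-- The event that the alive-set of each type is exactly `A k`. -/
def Ee (T : (k : Fin L) → Fin (n k) → Ω → ℝ) (t : ℝ)
    (A : (k : Fin L) → Finset (Fin (n k))) : Set Ω :=
  {ω | ∀ k, univ.filter (fun j => t < T k j ω) = A k}

/-- The event that every component in `A k` is alive. -/
def Gg (T : (k : Fin L) → Fin (n k) → Ω → ℝ) (t : ℝ)
    (A : (k : Fin L) → Finset (Fin (n k))) : Set Ω :=
  {ω | ∀ k, ∀ j ∈ A k, t < T k j ω}

def sE (t : ℝ) (A : (k : Fin L) → Finset (Fin (n k))) :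
    Set ((k : Fin L) → Fin (n k) → ℝ) :=
  {f | ∀ k, univ.filter (fun j => t < f k j) = A k}

def sG (t : ℝ) (A : (k : Fin L) → Finset (Fin (n k))) :
    Set ((k : Fin L) → Fin (n k) → ℝ) :=
  {f | ∀ k, ∀ j ∈ A k, t < f k j}

lemma meas_coord (k : Fin L) (j : Fin (n k)) :
    Measurable fun f : (k : Fin L) → Fin (n k) → ℝ => f k j :=
  (measurable_pi_apply j).comp (measurable_pi_apply k)

lemma meas_sE (t : ℝ) (A : (k : Fin L) → Finset (Fin (n k))) :
    MeasurableSet (sE t A) := by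
  have h : sE t A = ⋂ k, ⋂ j, {f : (k : Fin L) → Fin (n k) → ℝ | j ∈ A k ↔ t < f k j} := by
    ext f
    simp only [sE, Set.mem_setOf_eq, Set.mem_iInter]
    constructor
    · intro h k j
      rw [← h k]
      simp
    · intro h k
      ext j
      simp [← h k j]
  rw [h]
  refine MeasurableSet.iInter fun k => MeasurableSet.iInter fun j => ?_
  by_cases hj : j ∈ A k
  · have he : {f : (k : Fin L) → Fin (n k) → ℝ | j ∈ A k ↔ t < f k j}
        = {f | t < f k j} := by ext f; simp [hj]
    rw [he]
    exact measurableSet_lt measurable_const (meas_coord k j)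
  · have he : {f : (k : Fin L) → Fin (n k) → ℝ | j ∈ A k ↔ t < f k j}
        = {f | t < f k j}ᶜ := by ext f; simp [hj]
    rw [he]
    exact (measurableSet_lt measurable_const (meas_coord k j)).compl

lemma meas_sG (t : ℝ) (A : (k : Fin L) → Finset (Fin (n k))) :
    MeasurableSet (sG t A) := by
  have h : sG t A = ⋂ k, ⋂ j, {f : (k : Fin L) → Fin (n k) → ℝ | j ∈ A k → t < f k j} := by
    ext f
    simp [sG, Set.mem_iInter]
  rw [h]
  refine MeasurableSet.iInter fun k => MeasurableSet.iInter fun j => ?_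
  by_cases hj : j ∈ A k
  · have he : {f : (k : Fin L) → Fin (n k) → ℝ | j ∈ A k → t < f k j}
        = {f | t < f k j} := by ext f; simp [hj]
    rw [he]
    exact measurableSet_lt measurable_const (meas_coord k j)
  · have he : {f : (k : Fin L) → Fin (n k) → ℝ | j ∈ A k → t < f k j}
        = Set.univ := by ext f; simp [hj]
    rw [he]
    exact MeasurableSet.univ

variable (T : (k : Fin L) → Fin (n k) → Ω → ℝ) (t : ℝ)

lemma measurable_X (hT : ∀ k j, Measurable (T k j)) :
    Measurable fun ω (k : Fin L) (j : Fin (n k)) => T k j ω :=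
  measurable_pi_lambda _ fun k => measurable_pi_lambda _ fun j => hT k j

lemma meas_Ee (hT : ∀ k j, Measurable (T k j)) (A : (k : Fin L) → Finset (Fin (n k))) :
    MeasurableSet (Ee T t A) :=
  measurable_X T hT (meas_sE t A)

lemma meas_Gg (hT : ∀ k j, Measurable (T k j)) (A : (k : Fin L) → Finset (Fin (n k))) :
    MeasurableSet (Gg T t A) :=
  measurable_X T hT (meas_sG t A)

variable (P : Measure Ω)

lemma map_inv (hT : ∀ k j, Measurable (T k j))
    (hexch : ∀ σ : (k : Fin L) → Equiv.Perm (Fin (n k)),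
      Measure.map (fun ω (k : Fin L) (j : Fin (n k)) => T k (σ k j) ω) P
        = Measure.map (fun ω (k : Fin L) (j : Fin (n k)) => T k j ω) P)
    (σ : (k : Fin L) → Equiv.Perm (Fin (n k)))
    (s : Set ((k : Fin L) → Fin (n k) → ℝ)) (hs : MeasurableSet s) :
    P ((fun ω (k : Fin L) (j : Fin (n k)) => T k (σ k j) ω) ⁻¹' s)
      = P ((fun ω (k : Fin L) (j : Fin (n k)) => T k j ω) ⁻¹' s) := by
  have h1 : Measurable fun ω (k : Fin L) (j : Fin (n k)) => T k (σ k j) ω :=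
    measurable_pi_lambda _ fun k => measurable_pi_lambda _ fun j => hT k (σ k j)
  rw [← Measure.map_apply h1 hs, ← Measure.map_apply (measurable_X T hT) hs, hexch σ]

lemma Ee_preimage_perm (σ : (k : Fin L) → Equiv.Perm (Fin (n k)))
    (A : (k : Fin L) → Finset (Fin (n k))) :
    (fun ω (k : Fin L) (j : Fin (n k)) => T k (σ k j) ω) ⁻¹' sE t A
      = Ee T t (fun k => (A k).image (σ k)) := by
  ext ω
  simp only [Set.mem_preimage, sE, Ee, Set.mem_setOf_eq]
  exact forall_congr' fun k => filt_perm (σ k) (fun j => t < T k j ω) (A k)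

lemma Gg_preimage_perm (σ : (k : Fin L) → Equiv.Perm (Fin (n k)))
    (A : (k : Fin L) → Finset (Fin (n k))) :
    (fun ω (k : Fin L) (j : Fin (n k)) => T k (σ k j) ω) ⁻¹' sG t A
      = Gg T t (fun k => (A k).image (σ k)) := by
  ext ω
  simp only [Set.mem_preimage, sG, Gg, Set.mem_setOf_eq]
  refine forall_congr' fun k => ?_
  constructor
  · intro h m hm
    obtain ⟨j, hj, rfl⟩ := Finset.mem_image.mp hm
    exact h j hj
  · intro h j hj
    exact h _ (Finset.mem_image_of_mem _ hj)

lemma prob_Ee_card (hT : ∀ k j, Measurable (T k j))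
    (hexch : ∀ σ : (k : Fin L) → Equiv.Perm (Fin (n k)),
      Measure.map (fun ω (k : Fin L) (j : Fin (n k)) => T k (σ k j) ω) P
        = Measure.map (fun ω (k : Fin L) (j : Fin (n k)) => T k j ω) P)
    (A B : (k : Fin L) → Finset (Fin (n k))) (h : ∀ k, (A k).card = (B k).card) :
    P (Ee T t A) = P (Ee T t B) := by
  have hex : ∀ k, ∃ σ : Equiv.Perm (Fin (n k)), (A k).image σ = B k :=
    fun k => exists_perm_image (h k)
  choose σ hσ using hex
  have himg : (fun k => (A k).image (σ k)) = B := funext hσ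
  rw [← himg, ← Ee_preimage_perm T t σ A,
    map_inv T P hT hexch σ (sE t A) (meas_sE t A)]
  rfl

lemma prob_Gg_card (hT : ∀ k j, Measurable (T k j))
    (hexch : ∀ σ : (k : Fin L) → Equiv.Perm (Fin (n k)),
      Measure.map (fun ω (k : Fin L) (j : Fin (n k)) => T k (σ k j) ω) P
        = Measure.map (fun ω (k : Fin L) (j : Fin (n k)) => T k j ω) P)
    (A B : (k : Fin L) → Finset (Fin (n k))) (h : ∀ k, (A k).card = (B k).card) :
    P (Gg T t A) = P (Gg T t B) := by
  have hex : ∀ k, ∃ σ : Equiv.Perm (Fin (n k)), (A k).image σ = B k :=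
    fun k => exists_perm_image (h k)
  choose σ hσ using hex
  have himg : (fun k => (A k).image (σ k)) = B := funext hσ
  rw [← himg, ← Gg_preimage_perm T t σ A,
    map_inv T P hT hexch σ (sG t A) (meas_sG t A)]
  rfl

lemma pairwise_Ee (s : Finset ((k : Fin L) → Finset (Fin (n k)))) :
    (↑s : Set ((k : Fin L) → Finset (Fin (n k)))).PairwiseDisjoint (Ee T t) := by
  intro A _ B _ hne
  refine Set.disjoint_left.mpr fun ω hA hB => hne ?_
  funext k
  rw [← hA k, ← hB k]

lemma prob_target (hT : ∀ k j, Measurable (T k j)) (l : Fin L → ℕ) :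
    P {ω | ∀ k, (univ.filter fun j : Fin (n k) => t < T k j ω).card = l k}
      = ∑ A ∈ univ.filter
          (fun A : (k : Fin L) → Finset (Fin (n k)) => ∀ k, (A k).card = l k),
          P (Ee T t A) := by
  have hset : {ω | ∀ k, (univ.filter fun j : Fin (n k) => t < T k j ω).card = l k}
      = ⋃ A ∈ univ.filter
          (fun A : (k : Fin L) → Finset (Fin (n k)) => ∀ k, (A k).card = l k),
          Ee T t A := by
    ext ω
    simp only [Set.mem_setOf_eq, Set.mem_iUnion, Finset.mem_filter, Finset.mem_univ,
      true_and, Ee]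
    constructor
    · intro h
      exact ⟨fun k => univ.filter fun j => t < T k j ω, h, fun k => rfl⟩
    · rintro ⟨A, hcard, hAeq⟩ k
      rw [hAeq k]
      exact hcard k
  rw [hset]
  exact measure_biUnion_finset (pairwise_Ee T t _) fun A _ => meas_Ee T t hT A

lemma prob_Gg (hT : ∀ k j, Measurable (T k j)) (B : (k : Fin L) → Finset (Fin (n k))) :
    P (Gg T t B)
      = ∑ C ∈ univ.filter
          (fun C : (k : Fin L) → Finset (Fin (n k)) => ∀ k, B k ⊆ C k),
          P (Ee T t C) := by
  have hset : Gg T t B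
      = ⋃ C ∈ univ.filter
          (fun C : (k : Fin L) → Finset (Fin (n k)) => ∀ k, B k ⊆ C k),
          Ee T t C := by
    ext ω
    simp only [Gg, Ee, Set.mem_setOf_eq, Set.mem_iUnion, Finset.mem_filter,
      Finset.mem_univ, true_and]
    constructor
    · intro h
      refine ⟨fun k => univ.filter fun j => t < T k j ω, fun k j hj => ?_, fun k => rfl⟩
      simp only [Finset.mem_filter, Finset.mem_univ, true_and]
      exact h k j hj
    · rintro ⟨C, hsub, hCeq⟩ k j hj
      have := hsub k hj
      rw [← hCeq k] at this
      simp only [Finset.mem_filter] at this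
      exact this.2
  rw [hset]
  exact measure_biUnion_finset (pairwise_Ee T t _) fun A _ => meas_Ee T t hT A

end Measure

end S11


/-- Under within-type exchangeability, the probability that exactly
`l_k` components of each type `k` are alive at time `t` equals the binomial coefficients
times the alternating sum of the joint survival probabilities `S((l+i); t)`. -/
theorem stmt_11
    {Ω : Type*} [MeasurableSpace Ω] (P : Measure Ω) [IsProbabilityMeasure P]
    {L : ℕ} (hL : 1 ≤ L) (n : Fin L → ℕ) (hn : ∀ l, 1 ≤ n l)
    (T : (l : Fin L) → Fin (n l) → Ω → ℝ)
    (hTmeas : ∀ l j, Measurable (T l j))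
    (hexch : ∀ σ : (l : Fin L) → Equiv.Perm (Fin (n l)),
      Measure.map (fun ω (l : Fin L) (j : Fin (n l)) => T l (σ l j) ω) P
        = Measure.map (fun ω (l : Fin L) (j : Fin (n l)) => T l j ω) P)
    (t : ℝ) (ht : 0 ≤ t) (l : Fin L → ℕ) (hl : ∀ k, l k ≤ n k) :
    (P {ω | ∀ k,
        (Finset.univ.filter fun j : Fin (n k) => t < T k j ω).card = l k}).toReal
    = (∏ k, (Nat.choose (n k) (l k) : ℝ)) *
        ∑ i : (k : Fin L) → Fin (n k - l k + 1),
          (-1 : ℝ) ^ (∑ k, (i k : ℕ))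
            * (∏ k, (Nat.choose (n k - l k) (i k) : ℝ))
            * (P {ω | ∀ k, ∀ r : Fin (n k),
                (r : ℕ) < l k + (i k : ℕ) → t < T k r ω}).toReal := by
  have hGseg : ∀ i : (k : Fin L) → Fin (n k - l k + 1),
      {ω | ∀ k, ∀ r : Fin (n k), (r : ℕ) < l k + (i k : ℕ) → t < T k r ω}
        = S11.Gg T t (fun k => S11.seg (n k) (l k + (i k : ℕ))) := by
    intro i
    ext ω
    simp [S11.Gg, S11.mem_seg]
  have hg : ∀ A B : (k : Fin L) → Finset (Fin (n k)), (∀ k, (A k).card = (B k).card) →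
      (P (S11.Gg T t A)).toReal = (P (S11.Gg T t B)).toReal :=
    fun A B h => by rw [S11.prob_Gg_card T t P hTmeas hexch A B h]
  have hmo : (P (S11.Ee T t (fun k => S11.seg (n k) (l k)))).toReal
      = ∑ B ∈ univ.filter
          (fun B : (k : Fin L) → Finset (Fin (n k)) => ∀ k, S11.seg (n k) (l k) ⊆ B k),
          (-1 : ℝ) ^ (∑ k, (B k \ S11.seg (n k) (l k)).card)
            * (P (S11.Gg T t B)).toReal :=
    S11.moebius (fun A => (P (S11.Ee T t A)).toReal)
      (fun B => (P (S11.Gg T t B)).toReal)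
      (fun B => by
        show (P (S11.Gg T t B)).toReal = ∑ C ∈ univ.filter
          (fun C : (k : Fin L) → Finset (Fin (n k)) => ∀ k, B k ⊆ C k),
          (P (S11.Ee T t C)).toReal
        rw [S11.prob_Gg T t P hTmeas B]
        exact ENNReal.toReal_sum fun _ _ => measure_ne_top P _)
      (fun k => S11.seg (n k) (l k))
  have hre : (∑ B ∈ univ.filter
        (fun B : (k : Fin L) → Finset (Fin (n k)) => ∀ k, S11.seg (n k) (l k) ⊆ B k),
        (-1 : ℝ) ^ (∑ k, (B k \ S11.seg (n k) (l k)).card)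
          * (P (S11.Gg T t B)).toReal)
      = ∑ i : (k : Fin L) → Fin (n k - l k + 1),
          (-1 : ℝ) ^ (∑ k, (i k : ℕ)) * (∏ k, (Nat.choose (n k - l k) (i k) : ℝ))
            * (P (S11.Gg T t (fun k => S11.seg (n k) (l k + (i k : ℕ))))).toReal :=
    S11.regroup (fun B => (P (S11.Gg T t B)).toReal) hg l hl
  rw [S11.prob_target T t P hTmeas l, ENNReal.toReal_sum (fun _ _ => measure_ne_top P _)]
  have h2 : ∀ A ∈ univ.filter
      (fun A : (k : Fin L) → Finset (Fin (n k)) => ∀ k, (A k).card = l k),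
      (P (S11.Ee T t A)).toReal
        = (P (S11.Ee T t (fun k => S11.seg (n k) (l k)))).toReal := by
    intro A hA
    simp only [Finset.mem_filter, Finset.mem_univ, true_and] at hA
    rw [S11.prob_Ee_card T t P hTmeas hexch A (fun k => S11.seg (n k) (l k))
      (fun k => by rw [hA k, S11.card_seg (hl k)])]
  rw [Finset.sum_congr rfl h2, Finset.sum_const]
  have hcardprof : (univ.filter
      (fun A : (k : Fin L) → Finset (Fin (n k)) => ∀ k, (A k).card = l k)).card
      = ∏ k, Nat.choose (n k) (l k) := by
    have hpf : univ.filter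
        (fun A : (k : Fin L) → Finset (Fin (n k)) => ∀ k, (A k).card = l k)
        = Fintype.piFinset (fun k => Finset.powersetCard (l k) univ) := by
      ext A
      simp [Fintype.mem_piFinset, Finset.mem_powersetCard]
    rw [hpf, Fintype.card_piFinset]
    simp [Finset.card_powersetCard, Finset.card_univ]
  rw [hcardprof, hmo, hre, nsmul_eq_mul, Nat.cast_prod]
  congr 1
  refine Finset.sum_congr rfl fun i _ => ?_
  rw [hGseg i]
end

section
/- Let T^{(l)}_j, 1 ≤ j ≤ n_l, 1 ≤ l ≤ L, be mutually independent nonnegative random variables such that all type-l lifetimes have common continuous distribution function F_l, and suppose the type-i distribution is absolutely continuous with density f_i. Let T := min_{1≤l≤L} max_{1≤j≤n_l} T^{(l)}_j be the lifetime of the series-parallel system (a series connection of L parallel subsystems, subsystem l consisting of the n_l components of type l). Then E[ #{ j : T^{(i)}_j ≤ T } ] = n_i ∫_0^∞ ( ∏_{l≠i} (1 − F_l(t)^{n_l}) ) f_i(t) dt. -/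
/-!
By linearity the expected count is `n_i` times the probability that one fixed type-`i` component
`T^{(i)}_j` fails no later than every other subsystem, i.e. `T^{(i)}_j ≤ max_r T^{(l)}_r` for all
`l ≠ i` (it cannot outlive its own subsystem). Grouping the independent lifetimes by subsystem,
the maxima `max_r T^{(l)}_r`, `l ≠ i`, are independent of each other and of `T^{(i)}_j`, and by
continuity of `F_l` the maximum is `≥ t` with probability `1 - F_l(t)^{n_l}`. Conditioning on
`T^{(i)}_j = t`, whose law has density `f` and lives on `[0, ∞)`, gives the integral.
-/

open MeasureTheory Finset ProbabilityTheory

lemma le_inf'_sup'_iff_of_mem {α ι : Type*} [Lattice α] [DecidableEq ι] {κ : ι → Type*}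
    {s : Finset ι} (hs : s.Nonempty) {t : (l : ι) → Finset (κ l)} (ht : ∀ l, (t l).Nonempty)
    {g : (l : ι) → κ l → α} {i : ι} {j : κ i} (hi : i ∈ s) (hj : j ∈ t i) :
    g i j ≤ s.inf' hs (fun l ↦ (t l).sup' (ht l) (g l)) ↔
      ∀ l ∈ s.erase i, g i j ≤ (t l).sup' (ht l) (g l) := by
  rw [le_inf'_iff]
  refine ⟨fun h l hl ↦ h l (mem_of_mem_erase hl), fun h l hl ↦ ?_⟩
  by_cases hli : l = i
  · subst hli
    exact le_sup' (g l) hj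
  · exact h l (mem_erase.2 ⟨hli, hl⟩)

namespace ProbabilityTheory

variable {Ω ι : Type*} {mΩ : MeasurableSpace Ω} {P : Measure Ω}

lemma cdf_map_eq [IsProbabilityMeasure P] {X : Ω → ℝ} (hX : Measurable X) {F : ℝ → ℝ}
    (hF : ∀ x, P.real {ω | X ω ≤ x} = F x) : cdf (P.map X) = F := by
  have := Measure.isProbabilityMeasure_map (μ := P) hX.aemeasurable
  ext x
  rw [cdf_eq_real, map_measureReal_apply hX measurableSet_Iic]
  exact hF x

lemma measure_ge_eq_ofReal_one_sub_of_continuousAt [IsProbabilityMeasure P] {X : Ω → ℝ}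
    (hX : Measurable X) {F : ℝ → ℝ} (hF : ∀ x, P.real {ω | X ω ≤ x} = F x) {t : ℝ}
    (hFt : ContinuousAt F t) : P {ω | t ≤ X ω} = ENNReal.ofReal (1 - F t) := by
  have := Measure.isProbabilityMeasure_map (μ := P) hX.aemeasurable
  have hcdf := cdf_map_eq hX hF
  rw [← hcdf] at hFt ⊢
  change P (X ⁻¹' Set.Ici t) = _
  rw [← Measure.map_apply hX measurableSet_Ici]
  conv_lhs => rw [← measure_cdf (P.map X)]
  rw [StieltjesFunction.measure_Ici _ (tendsto_cdf_atTop _),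
    hFt.continuousWithinAt.leftLim_eq]

lemma map_eq_withDensity_of_measureReal_le_eq_integral [IsProbabilityMeasure P] {X : Ω → ℝ}
    (hX : Measurable X) {f : ℝ → ℝ} (hf : 0 ≤ f)
    (h : ∀ x, P.real {ω | X ω ≤ x} = ∫ s in Set.Iic x, f s) :
    P.map X = volume.withDensity (fun s ↦ ENNReal.ofReal (f s)) := by
  have := Measure.isProbabilityMeasure_map (μ := P) hX.aemeasurable
  have hcdf (x : ℝ) : cdf (P.map X) x = ∫ s in Set.Iic x, f s :=
    congrFun (cdf_map_eq hX h) x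
  -- A non-integrable `f` would have set integral `0`, but the cdf is eventually positive.
  have hint (x : ℝ) : IntegrableOn f (Set.Iic x) := by
    obtain ⟨y, hy, hxy⟩ := ((tendsto_cdf_atTop (P.map X)).eventually_const_lt zero_lt_one
      |>.and (Filter.eventually_ge_atTop x)).exists
    by_contra hx
    rw [hcdf, integral_undef fun hy' : IntegrableOn f (Set.Iic y) volume ↦
      hx (hy'.mono_set (Set.Iic_subset_Iic.2 hxy))] at hy
    exact lt_irrefl 0 hy
  refine Measure.ext_of_Iic _ _ fun x ↦ ?_
  rw [← ofReal_cdf, hcdf, withDensity_apply _ measurableSet_Iic,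
    ofReal_integral_eq_lintegral_ofReal (hint x) (Filter.Eventually.of_forall hf)]

lemma map_eq_withDensity_restrict_Ioi_of_nonneg {X : Ω → ℝ} (hX : Measurable X)
    (hX₀ : ∀ ω, 0 ≤ X ω) {g : ℝ → ENNReal} (hg : P.map X = volume.withDensity g) :
    P.map X = (volume.restrict (Set.Ioi 0)).withDensity g := by
  have hsupp : ∀ᵐ t ∂P.map X, t ∈ Set.Ici 0 :=
    (ae_map_iff hX.aemeasurable measurableSet_Ici).2 (Filter.Eventually.of_forall hX₀)
  rw [← Measure.restrict_eq_self_of_ae_mem hsupp, hg, restrict_withDensity measurableSet_Ici,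
    Measure.restrict_congr_set Ioi_ae_eq_Ici]

lemma iIndepFun.measure_sup'_le {X : ι → Ω → ℝ} (h : iIndepFun X P) {s : Finset ι}
    (hs : s.Nonempty) (x : ℝ) :
    P {ω | s.sup' hs (X · ω) ≤ x} = ∏ r ∈ s, P {ω | X r ω ≤ x} := by
  have hevent : {ω | s.sup' hs (X · ω) ≤ x} = ⋂ r ∈ s, X r ⁻¹' Set.Iic x := by
    ext; simp [Finset.sup'_le_iff]
  rw [hevent, h.measure_inter_preimage_eq_mul s fun _ _ ↦ measurableSet_Iic]
  rfl

lemma iIndepFun.measure_le_sup' [IsProbabilityMeasure P] [Fintype ι] {X : ι → Ω → ℝ}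
    (h : iIndepFun X P) (hX : ∀ r, Measurable (X r)) (hne : (univ : Finset ι).Nonempty)
    {F : ℝ → ℝ} (hF : ∀ r x, P.real {ω | X r ω ≤ x} = F x) (hFc : Continuous F) (t : ℝ) :
    P {ω | t ≤ univ.sup' hne (X · ω)} = ENNReal.ofReal (1 - F t ^ Fintype.card ι) := by
  refine measure_ge_eq_ofReal_one_sub_of_continuousAt (by fun_prop) (fun x ↦ ?_)
    (hFc.pow _).continuousAt
  rw [measureReal_def, h.measure_sup'_le, ENNReal.toReal_prod]
  simp [← measureReal_def, hF]

lemma iIndepFun.curry [IsProbabilityMeasure P] {κ : ι → Type*} {𝓧 : (i : ι) → κ i → Type*}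
    {m𝓧 : ∀ i j, MeasurableSpace (𝓧 i j)} {X : (i : ι) → (j : κ i) → Ω → 𝓧 i j}
    (mX : ∀ i j, Measurable (X i j)) (h : iIndepFun (fun p : (i : ι) × κ i ↦ X p.1 p.2) P) :
    iIndepFun (fun i ω ↦ (X i · ω)) P := by
  have _ i j := Measure.isProbabilityMeasure_map (μ := P) (mX i j).aemeasurable
  have hcurry : (fun ω i j ↦ X i j ω) =
      MeasurableEquiv.piCurry 𝓧 ∘ (fun ω (p : (i : ι) × κ i) ↦ X p.1 p.2 ω) := by
    ext; simp [Sigma.curry]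
  rw [iIndepFun_iff_map_fun_eq_infinitePi_map (by fun_prop), hcurry,
    ← Measure.map_map (by fun_prop) (by fun_prop),
    (iIndepFun_iff_map_fun_eq_infinitePi_map (by fun_prop)).1 h,
    Measure.infinitePi_map_piCurry (fun i j ↦ P.map (X i j))]
  congrm Measure.infinitePi fun i ↦ ?_
  exact ((iIndepFun_iff_map_fun_eq_infinitePi_map (mX i)).1
    (h.precomp (g := Sigma.mk i) sigma_mk_injective)).symm

lemma IndepFun.measure_prodMk_preimage [IsFiniteMeasure P] {β γ : Type*}
    [MeasurableSpace β] [MeasurableSpace γ] {X : Ω → β} {Y : Ω → γ} (hXY : IndepFun X Y P)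
    (hX : Measurable X) (hY : Measurable Y) {s : Set (β × γ)} (hs : MeasurableSet s) :
    P ((fun ω ↦ (X ω, Y ω)) ⁻¹' s) = ∫⁻ x, P (Y ⁻¹' (Prod.mk x ⁻¹' s)) ∂P.map X := by
  rw [← Measure.map_apply (hX.prodMk hY) hs,
    (indepFun_iff_map_prod_eq_prod_map_map hX.aemeasurable hY.aemeasurable).1 hXY,
    Measure.prod_apply hs]
  exact lintegral_congr fun x ↦ Measure.map_apply hY (measurable_prodMk_left hs)

lemma iIndepFun.measure_forall_le_eq_lintegral [IsProbabilityMeasure P] {β : ι → Type*}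
    {mβ : ∀ l, MeasurableSpace (β l)} {B : (l : ι) → Ω → β l} (hB : iIndepFun B P)
    (mB : ∀ l, Measurable (B l)) {i : ι} {S : Finset ι} (hi : i ∉ S) {φ : β i → ℝ}
    (hφ : Measurable φ) {ψ : (l : ι) → β l → ℝ} (hψ : ∀ l, Measurable (ψ l)) :
    P {ω | ∀ l ∈ S, φ (B i ω) ≤ ψ l (B l ω)} =
      ∫⁻ t, ∏ l ∈ S, P {ω | t ≤ ψ l (B l ω)} ∂P.map (fun ω ↦ φ (B i ω)) := by
  let Y : Ω → S → ℝ := fun ω l ↦ ψ l (B l ω)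
  have hY : Measurable Y := measurable_pi_lambda _ fun l ↦ (hψ l).comp (mB l)
  have hXY : IndepFun (fun ω ↦ φ (B i ω)) Y P :=
    (hB.indepFun_finset {i} S (disjoint_singleton_left.2 hi) mB).comp
      (hφ.comp (measurable_pi_apply (⟨i, mem_singleton_self i⟩ : ({i} : Finset ι))))
      (by fun_prop : Measurable fun (y : (l : S) → β l) (l : S) ↦ ψ l (y l))
  let C : Set (ℝ × (S → ℝ)) := {p | ∀ l, p.1 ≤ p.2 l}
  have hC : MeasurableSet C := by
    simp only [C, Set.ofPred_forall]
    exact .iInter fun l ↦ measurableSet_le measurable_fst (by fun_prop)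
  have hevent : {ω | ∀ l ∈ S, φ (B i ω) ≤ ψ l (B l ω)} =
      (fun ω ↦ (φ (B i ω), Y ω)) ⁻¹' C := by
    ext ω; simp [C, Y]
  rw [hevent, hXY.measure_prodMk_preimage (hφ.comp (mB i)) hY hC]
  refine lintegral_congr fun t ↦ ?_
  have hslice : Y ⁻¹' (Prod.mk t ⁻¹' C) = ⋂ l ∈ S, (ψ l ∘ B l) ⁻¹' Set.Ici t := by
    ext ω; simp [C, Y]
  rw [hslice, (hB.comp ψ hψ).measure_inter_preimage_eq_mul S fun _ _ ↦ measurableSet_Ici]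
  rfl

lemma integral_card_filter [IsFiniteMeasure P] (s : Finset ι) {p : ι → Ω → Prop}
    [∀ j ω, Decidable (p j ω)] (hp : ∀ j, MeasurableSet {ω | p j ω}) :
    ∫ ω, (#{j ∈ s | p j ω} : ℝ) ∂P = ∑ j ∈ s, P.real {ω | p j ω} := by
  have hcount (ω : Ω) :
      (#{j ∈ s | p j ω} : ℝ) = ∑ j ∈ s, {ω | p j ω}.indicator 1 ω := by
    simp only [natCast_card_filter, Set.indicator_apply, Set.mem_ofPred_eq, Pi.one_apply]
  simp_rw [hcount]
  rw [integral_finsetSum _ fun j _ ↦ (integrable_const 1).indicator (hp j)]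
  simp_rw [integral_indicator_one (hp _)]

end ProbabilityTheory

lemma measureReal_forall_le_sup'_eq_integral {Ω : Type*} [MeasurableSpace Ω] {P : Measure Ω}
    [IsProbabilityMeasure P] {L : ℕ} {n : Fin L → ℕ}
    (hne : ∀ l, (univ : Finset (Fin (n l))).Nonempty) {T : (l : Fin L) → Fin (n l) → Ω → ℝ}
    (hTmeas : ∀ l j, Measurable (T l j)) (hTnn : ∀ l j ω, 0 ≤ T l j ω)
    (hindep : iIndepFun (fun p : Σ l : Fin L, Fin (n l) ↦ fun ω ↦ T p.1 p.2 ω) P)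
    {F : Fin L → ℝ → ℝ} (hF : ∀ l j x, P.real {ω | T l j ω ≤ x} = F l x)
    (hFcont : ∀ l, Continuous (F l)) {i : Fin L} {f : ℝ → ℝ} (hfmeas : Measurable f)
    (hfnn : ∀ x, 0 ≤ f x) (hdens : ∀ x : ℝ, F i x = ∫ s in Set.Iic x, f s) (j : Fin (n i)) :
    P.real {ω | ∀ l ∈ univ.erase i, T i j ω ≤ univ.sup' (hne l) (T l · ω)} =
      ∫ t in Set.Ioi 0, (∏ l ∈ univ.erase i, (1 - F l t ^ n l)) * f t := by
  have hsurv (l : Fin L) (t : ℝ) : 0 ≤ 1 - F l t ^ n l := by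
    obtain ⟨r, -⟩ := hne l
    rw [← hF l r t]
    exact sub_nonneg.2 (pow_le_one₀ measureReal_nonneg measureReal_le_one)
  have hG (t : ℝ) : 0 ≤ ∏ l ∈ univ.erase i, (1 - F l t ^ n l) :=
    prod_nonneg fun l _ ↦ hsurv l t
  have hupper (l : Fin L) (t : ℝ) :
      P {ω | t ≤ univ.sup' (hne l) (T l · ω)} = ENNReal.ofReal (1 - F l t ^ n l) := by
    simpa using (hindep.precomp sigma_mk_injective).measure_le_sup' (hTmeas l) (hne l) (hF l)
      (hFcont l) t
  have hlaw : P.map (T i j) =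
      (volume.restrict (Set.Ioi 0)).withDensity fun s ↦ ENNReal.ofReal (f s) :=
    map_eq_withDensity_restrict_Ioi_of_nonneg (hTmeas i j) (hTnn i j)
      (map_eq_withDensity_of_measureReal_le_eq_integral (hTmeas i j) hfnn fun x ↦
        (hF i j x).trans (hdens x))
  rw [measureReal_def, (hindep.curry hTmeas).measure_forall_le_eq_lintegral
      (fun l ↦ measurable_pi_lambda _ (hTmeas l)) (notMem_erase i univ) (measurable_pi_apply j)
      (fun l ↦ by fun_prop), hlaw,
    integral_eq_lintegral_of_nonneg_ae (.of_forall fun t ↦ mul_nonneg (hG t) (hfnn t))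
      (by fun_prop)]
  simp_rw [hupper]
  rw [lintegral_withDensity_eq_lintegral_mul _ hfmeas.ennreal_ofReal (by fun_prop)]
  congr 1
  refine lintegral_congr fun t ↦ ?_
  rw [Pi.mul_apply, ← ENNReal.ofReal_prod_of_nonneg fun l _ ↦ hsurv l t, mul_comm,
    ENNReal.ofReal_mul (hG t)]

/-- For a series-parallel system (series of `L` parallel subsystems,
subsystem `l` consisting of the `n_l` type-`l` components) with mutually independent
nonnegative lifetimes, common continuous type-`l` distribution functions `F_l`, and
type-`i` density `f`, the expected number of failed type-`i` components at the system
failure time is `n_i ∫_0^∞ (∏_{l≠i} (1 − F_l(t)^{n_l})) f(t) dt`. -/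
theorem stmt_13
    {Ω : Type*} [MeasurableSpace Ω] (P : Measure Ω) [IsProbabilityMeasure P]
    {L : ℕ} (hL : 0 < L) (n : Fin L → ℕ) (hn : ∀ l, 1 ≤ n l)
    (T : (l : Fin L) → Fin (n l) → Ω → ℝ)
    (hTmeas : ∀ l j, Measurable (T l j))
    (hTnn : ∀ l j ω, 0 ≤ T l j ω)
    (hindep : iIndepFun
      (fun p : Σ l : Fin L, Fin (n l) => fun ω => T p.1 p.2 ω) P)
    (F : Fin L → ℝ → ℝ)
    (hF : ∀ l j x, (P {ω | T l j ω ≤ x}).toReal = F l x)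
    (hFcont : ∀ l, Continuous (F l))
    (i : Fin L) (f : ℝ → ℝ) (hfmeas : Measurable f) (hfnn : ∀ x, 0 ≤ f x)
    (hdens : ∀ x : ℝ, F i x = ∫ s in Set.Iic x, f s) :
    ∫ ω, ((Finset.univ.filter fun j : Fin (n i) =>
        T i j ω ≤
          Finset.univ.inf' (Finset.univ_nonempty_iff.mpr (Fin.pos_iff_nonempty.mp hL))
            (fun l : Fin L =>
              Finset.univ.sup'
                (Finset.univ_nonempty_iff.mpr (Fin.pos_iff_nonempty.mp (hn l)))
                (fun r : Fin (n l) => T l r ω))).card : ℝ) ∂P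
    = (n i : ℝ) *
        ∫ t in Set.Ioi (0 : ℝ),
          (∏ l ∈ Finset.univ.erase i, (1 - F l t ^ (n l))) * f t := by
  have hne (l : Fin L) : (univ : Finset (Fin (n l))).Nonempty :=
    univ_nonempty_iff.mpr (Fin.pos_iff_nonempty.mp (hn l))
  have hcount (ω : Ω) :
      #{j | T i j ω ≤ univ.inf' (univ_nonempty_iff.mpr (Fin.pos_iff_nonempty.mp hL))
        fun l ↦ univ.sup' (hne l) (T l · ω)} =
      #{j | ∀ l ∈ univ.erase i, T i j ω ≤ univ.sup' (hne l) (T l · ω)} := by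
    congr 1
    exact filter_congr fun j _ ↦
      le_inf'_sup'_iff_of_mem (g := fun l r ↦ T l r ω) _ hne (mem_univ i) (mem_univ j)
  simp_rw [hcount]
  rw [integral_card_filter _ fun j ↦ ?_]
  · simp_rw [measureReal_forall_le_sup'_eq_integral hne hTmeas hTnn hindep hF hFcont hfmeas hfnn
      hdens, sum_const, card_univ, Fintype.card_fin, nsmul_eq_mul]
  · simp only [Set.ofPred_forall]
    exact .biInter (Set.to_countable _) fun l _ ↦
      measurableSet_le (hTmeas i j) (by fun_prop)
end
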